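/- arXiv:2001.03882 — 10 statements merged into one kernel-verified Lean document; each statement's English description precedes it below -/
import Mathlib

section
/- If the cosets d_i·ℤ + r_i for i = 1,…,s (with s ≥ 2 and each d_i > 1) partition ℤ, then the largest modulus d_s appears at least twice, i.e., there exist i ≠ j with d_i = d_j = max_k d_k. -/
open Finset

/-- If the cosets `d i • ℤ + r i` (`i = 1,…,s`, `s ≥ 2`, each `d i > 1`) partition `ℤ`,
then the largest modulus appears at least twice. -/
theorem erdos_largest_modulus_repeats
    (s : ℕ) (hs : 2 ≤ s) (d : Fin s → ℕ) (r : Fin s → ℤ)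
    (hd : ∀ i, 1 < d i)
    (hpart : ∀ x : ℤ, ∃! i : Fin s, (d i : ℤ) ∣ x - r i) :
    ∃ i j : Fin s, i ≠ j ∧ d i = d j ∧ ∀ k, d k ≤ d i := by
  by_contra hcon
  push_neg at hcon
  obtain ⟨m, -, hm⟩ := Finset.exists_max_image (Finset.univ : Finset (Fin s)) d
    ⟨⟨0, by omega⟩, Finset.mem_univ _⟩
  have hm' : ∀ k, d k ≤ d m := fun k => hm k (mem_univ _)
  set N := d m with hN
  have huniq : ∀ j, j ≠ m → d j ≠ N := by
    intro j hj hdj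
    obtain ⟨k, hk⟩ := hcon j m hj hdj
    exact absurd (hm' k) (by omega)
  have hN2 : 2 ≤ N := hd m
  set L := ∏ i, d i with hL
  have hdL : ∀ i, d i ∣ L := fun i => Finset.dvd_prod_of_mem d (mem_univ i)
  have hLpos : 0 < L := Finset.prod_pos (fun i _ => by have := hd i; omega)
  set ζ : ℂ := Complex.exp (2 * Real.pi * Complex.I / N) with hζdef
  have hζ : IsPrimitiveRoot ζ N := Complex.isPrimitiveRoot_exp N (by omega)
  have hζ1 : ζ ≠ 1 := hζ.ne_one (by omega)
  have hζ0 : ζ ≠ 0 := hζ.ne_zero (by omega)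
  have hζL : ζ ^ L = 1 := by
    obtain ⟨c, hc⟩ := hdL m
    rw [hc, pow_mul, hζ.pow_eq_one, one_pow]
  -- key computation per index
  have key : ∀ i : Fin s,
      (∑ x ∈ Finset.range L, if (d i : ℤ) ∣ (x : ℤ) - r i then ζ ^ x else 0)
      = ζ ^ (r i % (d i : ℤ)).toNat * ∑ k ∈ Finset.range (L / d i), (ζ ^ d i) ^ k := by
    intro i
    have hdi : 0 < d i := by have := hd i; omega
    set a : ℕ := (r i % (d i : ℤ)).toNat with ha
    have ha' : (a : ℤ) = r i % (d i : ℤ) := Int.toNat_of_nonneg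
      (Int.emod_nonneg _ (by exact_mod_cast hdi.ne'))
    have halt : a < d i := by
      have h1 := Int.emod_lt_of_pos (r i) (b := (d i : ℤ)) (by exact_mod_cast hdi)
      have : (a : ℤ) < (d i : ℤ) := by omega
      exact_mod_cast this
    have hra : (d i : ℤ) ∣ (a : ℤ) - r i := by
      rw [ha']
      have : (d i : ℤ) ∣ r i - r i % (d i : ℤ) := Int.dvd_self_sub_of_emod_eq rfl
      exact (dvd_sub_comm).mp this
    obtain ⟨c, hc⟩ := hdL i
    have hcL : L / d i = c := by rw [hc]; exact Nat.mul_div_cancel_left c hdi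
    have himg : (Finset.range L).filter (fun x : ℕ => (d i : ℤ) ∣ (x : ℤ) - r i)
        = (Finset.range c).image (fun k => a + d i * k) := by
      ext x
      simp only [mem_filter, mem_range, mem_image]
      constructor
      · rintro ⟨hxL, hxdvd⟩
        have hxa : (d i : ℤ) ∣ (x : ℤ) - a := by
          have := dvd_sub hxdvd hra
          simpa using this
        obtain ⟨t, ht⟩ := hxa
        have ht0 : 0 ≤ t := by
          by_contra hneg
          have : (d i : ℤ) * t ≤ (d i : ℤ) * (-1) :=
            mul_le_mul_of_nonneg_left (by omega) (by positivity)
          omega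
        refine ⟨t.toNat, ?_, ?_⟩
        · have hxc : (x : ℤ) < (d i : ℤ) * c := by
            have : (x : ℤ) < (L : ℤ) := by exact_mod_cast hxL
            rw [hc] at this; push_cast at this ⊢; linarith
          have htc : t < (c : ℤ) := by
            by_contra hge
            have : (d i : ℤ) * c ≤ (d i : ℤ) * t :=
              mul_le_mul_of_nonneg_left (by omega) (by positivity)
            omega
          omega
        · have : (x : ℤ) = (a : ℤ) + (d i : ℤ) * t.toNat := by
            rw [Int.toNat_of_nonneg ht0]; omega
          exact_mod_cast this.symm
      · rintro ⟨k, hk, rfl⟩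
        constructor
        · calc a + d i * k < d i + d i * k := by omega
            _ = d i * (k + 1) := by ring
            _ ≤ d i * c := Nat.mul_le_mul_left _ (by omega)
            _ = L := hc.symm
        · push_cast
          have : ((a : ℤ) + (d i : ℤ) * k) - r i = ((a : ℤ) - r i) + (d i : ℤ) * k := by ring
          rw [this]
          exact dvd_add hra ⟨k, rfl⟩
    rw [← Finset.sum_filter, himg, Finset.sum_image (by
      intro x _ y _ h
      have := Nat.add_left_cancel h
      exact Nat.eq_of_mul_eq_mul_left hdi this)]
    rw [hcL, Finset.mul_sum]
    congr 1
    ext k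
    rw [pow_add, pow_mul]
  -- total sum over range L is 0
  have h0 : ∑ x ∈ Finset.range L, ζ ^ x = 0 := by
    rw [geom_sum_eq hζ1, hζL]
    simp
  have hswap : ∀ x : ℕ, ζ ^ x = ∑ i, (if (d i : ℤ) ∣ (x : ℤ) - r i then ζ ^ x else 0) := by
    intro x
    obtain ⟨i0, hi0, hu⟩ := hpart (x : ℤ)
    rw [Finset.sum_eq_single i0]
    · simp [hi0]
    · intro j _ hj
      simp only [ite_eq_right_iff]
      intro hP
      exact absurd (hu j hP) hj
    · simp
  have htot : (0 : ℂ) = ∑ i, ζ ^ (r i % (d i : ℤ)).toNat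
      * ∑ k ∈ Finset.range (L / d i), (ζ ^ d i) ^ k := by
    calc (0 : ℂ) = ∑ x ∈ Finset.range L, ζ ^ x := h0.symm
      _ = ∑ x ∈ Finset.range L, ∑ i, (if (d i : ℤ) ∣ (x : ℤ) - r i then ζ ^ x else 0) := by
          exact Finset.sum_congr rfl fun x _ => hswap x
      _ = ∑ i, ∑ x ∈ Finset.range L, (if (d i : ℤ) ∣ (x : ℤ) - r i then ζ ^ x else 0) :=
          Finset.sum_comm
      _ = _ := Finset.sum_congr rfl fun i _ => key i
  -- non-maximal terms vanish
  have hvanish : ∀ i, i ≠ m → ζ ^ (r i % (d i : ℤ)).toNat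
      * ∑ k ∈ Finset.range (L / d i), (ζ ^ d i) ^ k = 0 := by
    intro i hi
    have hlt : d i < N := lt_of_le_of_ne (hm' i) (huniq i hi)
    have hne1 : ζ ^ d i ≠ 1 := hζ.pow_ne_one_of_pos_of_lt (by have := hd i; omega) hlt
    rw [geom_sum_eq hne1]
    rw [← pow_mul, Nat.mul_div_cancel' (hdL i), hζL]
    simp
  rw [Finset.sum_eq_single m (fun j _ hj => hvanish j hj) (by simp)] at htot
  have hζN : ζ ^ d m = 1 := hζ.pow_eq_one
  rw [hζN] at htot
  simp only [one_pow, Finset.sum_const, Finset.card_range, nsmul_eq_mul, mul_one] at htot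
  have hLN : 0 < L / N := Nat.div_pos (Nat.le_of_dvd hLpos (hdL m)) (by omega)
  have hne : ζ ^ (r m % (d m : ℤ)).toNat * ((L / d m : ℕ) : ℂ) ≠ 0 := by
    apply mul_ne_zero (pow_ne_zero _ hζ0)
    exact_mod_cast hLN.ne'
  exact hne htot.symm
end

section
/- If the cosets d_i·ℤ + r_i for i = 1,…,s partition ℤ (with every d_i > 1), then for every index i there exists j ≠ i such that either d_i = d_j or d_i properly divides d_j. -/
/-!
Suppose `d i` divided no other modulus, let `ζ` be a primitive `d i`-th root of unity and `N` the
product of all moduli. The sum of `ζ ^ x` over `0 ≤ x < N` vanishes. Splitting it along the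
covering, the class of each `j ≠ i` contributes `ζ ^ c * ∑ t < N / d j, (ζ ^ d j) ^ t = 0`, since
`ζ ^ d j ≠ 1`, whereas the class of `i` contributes `ζ ^ c * (N / d i) ≠ 0`.
-/

open Finset

theorem geom_sum_eq_zero_of_pow_eq_one {K : Type*} [DivisionRing K] {w : K} {n : ℕ}
    (hw : w ≠ 1) (hwn : w ^ n = 1) : ∑ t ∈ range n, w ^ t = 0 := by
  rw [geom_sum_eq hw, hwn, sub_self, zero_div]

theorem Finset.sum_eq_sum_sum_filter_of_existsUnique {ι α M : Type*} [Fintype ι]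
    [AddCommMonoid M] {s : Finset α} {p : ι → α → Prop} [∀ i, DecidablePred (p i)]
    (h : ∀ x ∈ s, ∃! i, p i x) (f : α → M) :
    ∑ x ∈ s, f x = ∑ i, ∑ x ∈ s with p i x, f x := by
  simp_rw [sum_filter]
  rw [sum_comm]
  refine sum_congr rfl fun x hx => ?_
  obtain ⟨i, hi, huniq⟩ := h x hx
  rw [sum_eq_single i (fun j _ hj => if_neg (mt (huniq j) hj)) (by simp), if_pos hi]

theorem filter_range_dvd_sub_eq_image {d N : ℕ} (hdN : d ∣ N) (hd : 0 < d) (r : ℤ) :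
    {x ∈ range N | (d : ℤ) ∣ ((x : ℕ) : ℤ) - r} = (range (N / d)).image (r.natMod d + d * ·) := by
  have hc : (r.natMod d : ℤ) = r % d := Int.toNat_of_nonneg (Int.emod_nonneg _ (by omega))
  ext x
  simp only [mem_filter, mem_range, mem_image]
  constructor
  · rintro ⟨hx, hdvd⟩
    refine ⟨x / d, Nat.div_lt_div_of_lt_of_dvd hdN hx, ?_⟩
    have hmod : x % d = r.natMod d := by
      have : r % d = (x : ℤ) % d := Int.modEq_iff_dvd.2 hdvd
      omega
    rw [← hmod, Nat.mod_add_div]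
  · rintro ⟨t, ht, rfl⟩
    refine ⟨?_, ?_⟩
    · have hlt := Int.natMod_lt (m := r) hd.ne'
      have hle : d * (t + 1) ≤ d * (N / d) := Nat.mul_le_mul_left _ ht
      rw [Nat.mul_div_cancel' hdN] at hle
      linarith
    · push_cast
      rw [hc, Int.emod_def]
      exact ⟨t - r / d, by ring⟩

theorem sum_pow_filter_range_dvd_sub {R : Type*} [Semiring R] (w : R) {d N : ℕ} (hdN : d ∣ N)
    (hd : 0 < d) (r : ℤ) :
    ∑ x ∈ range N with (d : ℤ) ∣ ((x : ℕ) : ℤ) - r, w ^ x =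
      w ^ r.natMod d * ∑ t ∈ range (N / d), (w ^ d) ^ t := by
  rw [filter_range_dvd_sub_eq_image hdN hd, sum_image
    fun t _ u _ h => Nat.eq_of_mul_eq_mul_left hd (Nat.add_left_cancel h), mul_sum]
  simp_rw [pow_add, pow_mul]

theorem sum_pow_filter_range_dvd_sub_eq_zero {K : Type*} [DivisionRing K] {w : K} {d N : ℕ}
    (hdN : d ∣ N) (hd : 0 < d) (hwN : w ^ N = 1) (hwd : w ^ d ≠ 1) (r : ℤ) :
    ∑ x ∈ range N with (d : ℤ) ∣ ((x : ℕ) : ℤ) - r, w ^ x = 0 := by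
  rw [sum_pow_filter_range_dvd_sub w hdN hd, geom_sum_eq_zero_of_pow_eq_one hwd, mul_zero]
  rw [← pow_mul, Nat.mul_div_cancel' hdN, hwN]

theorem sum_pow_filter_range_dvd_sub_of_pow_eq_one {R : Type*} [Semiring R] {w : R} {d N : ℕ}
    (hdN : d ∣ N) (hd : 0 < d) (hwd : w ^ d = 1) (r : ℤ) :
    ∑ x ∈ range N with (d : ℤ) ∣ ((x : ℕ) : ℤ) - r, w ^ x = w ^ r.natMod d * (N / d : ℕ) := by
  simp [sum_pow_filter_range_dvd_sub w hdN hd, hwd]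

theorem erdos_modulus_divides_another_general
    (s : ℕ) (d : Fin s → ℕ) (r : Fin s → ℤ)
    (hd : ∀ i, 1 < d i)
    (hpart : ∀ x : ℤ, ∃! i : Fin s, (d i : ℤ) ∣ x - r i) :
    ∀ i : Fin s, ∃ j : Fin s, j ≠ i ∧ (d i = d j ∨ (d i ∣ d j ∧ d i ≠ d j)) := by
  intro i
  suffices h : ∃ j ≠ i, d i ∣ d j by
    obtain ⟨j, hji, hdvd⟩ := h
    exact ⟨j, hji, (eq_or_ne (d i) (d j)).imp id (⟨hdvd, ·⟩)⟩
  by_contra! hcon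
  have hdpos : ∀ j, 0 < d j := fun j => zero_lt_one.trans (hd j)
  set N := ∏ j, d j
  have hdN : ∀ j, d j ∣ N := fun j => dvd_prod_of_mem d (mem_univ j)
  obtain ⟨ζ, hζ⟩ : ∃ ζ : ℂ, IsPrimitiveRoot ζ (d i) :=
    ⟨_, Complex.isPrimitiveRoot_exp _ (hdpos i).ne'⟩
  have hζN : ζ ^ N = 1 := (hζ.pow_eq_one_iff_dvd N).2 (hdN i)
  have hclass : ∀ j ≠ i, ∑ x ∈ range N with (d j : ℤ) ∣ ((x : ℕ) : ℤ) - r j, ζ ^ x = 0 := fun j hj =>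
    sum_pow_filter_range_dvd_sub_eq_zero (hdN j) (hdpos j) hζN
      (mt (hζ.pow_eq_one_iff_dvd _).1 (hcon j hj)) (r j)
  have htotal := sum_eq_sum_sum_filter_of_existsUnique (s := range N) (fun x _ => hpart x)
    (fun x => ζ ^ x)
  rw [geom_sum_eq_zero_of_pow_eq_one (hζ.ne_one (hd i)) hζN,
    sum_eq_single i (fun j _ hj => hclass j hj) (by simp),
    sum_pow_filter_range_dvd_sub_of_pow_eq_one (hdN i) (hdpos i) hζ.pow_eq_one] at htotal
  have hquot : N / d i ≠ 0 :=
    (Nat.div_pos (Nat.le_of_dvd (prod_pos fun j _ => hdpos j) (hdN i)) (hdpos i)).ne'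
  exact mul_ne_zero (pow_ne_zero _ (hζ.ne_zero (hdpos i).ne')) (Nat.cast_ne_zero.2 hquot)
    htotal.symm

/-- In an exact covering system of `ℤ`, every modulus equals, or properly divides,
some other modulus. -/
theorem erdos_modulus_divides_another
    (s : ℕ) (hs : 2 ≤ s) (d : Fin s → ℕ) (r : Fin s → ℤ)
    (hd : ∀ i, 1 < d i)
    (hpart : ∀ x : ℤ, ∃! i : Fin s, (d i : ℤ) ∣ x - r i) :
    ∀ i : Fin s, ∃ j : Fin s, j ≠ i ∧ (d i = d j ∨ (d i ∣ d j ∧ d i ≠ d j)) :=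
  erdos_modulus_divides_another_general s d r hd hpart
end

section
/- If the cosets d_i·ℤ + r_i for i = 1,…,s partition ℤ (with every d_i > 1), and some modulus d_k does not properly divide any other modulus d_j (j ≠ k), then d_k appears at least twice among d_1,…,d_s. -/
/-!
Reduce modulo `N = ∏ dᵢ` and sum the character `ψ x = exp (2πi x / d_k)` of `ZMod N` over each
class. Over all of `ZMod N` the sum vanishes because `d_k > 1`. Over a class of modulus `dᵢ`
with `d_k ∤ dᵢ` it vanishes as well: translation by `dᵢ` preserves the class but multiplies the
sum by `ψ dᵢ ≠ 1`. If `d_k` occurred only once, every modulus other than `d_k` would be of this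
kind, so the sum over the class modulo `d_k` would vanish too; but `ψ` is constant and nonzero
on that class.
-/

open Finset

theorem Finset.sum_sum_of_existsUnique_mem {ι α M : Type*} [Fintype ι] [Fintype α]
    [AddCommMonoid M] (t : ι → Finset α) (h : ∀ x, ∃! i, x ∈ t i) (f : α → M) :
    ∑ i, ∑ x ∈ t i, f x = ∑ x, f x := by
  classical
  simp only [← sum_ite_mem_eq (t _)]
  rw [sum_comm]
  refine sum_congr rfl fun x _ => ?_
  obtain ⟨i, hi, huniq⟩ := h x
  rw [sum_eq_single i (fun j _ hj => if_neg fun hj' => hj (huniq j hj')) (by simp), if_pos hi]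

theorem AddChar.sum_eq_zero_of_add_mem_iff {G R : Type*} [AddGroup G] [CommRing R] [IsDomain R]
    (ψ : AddChar G R) {s : Finset G} {g : G} (hs : ∀ x, x + g ∈ s ↔ x ∈ s) (hg : ψ g ≠ 1) :
    ∑ x ∈ s, ψ x = 0 := by
  by_contra hne
  refine hg ((mul_eq_right₀ hne).mp ?_)
  rw [mul_sum]
  exact sum_equiv (Equiv.addRight g) (fun x => (hs x).symm)
    (fun x _ => by rw [Equiv.coe_addRight, map_add_eq_mul, mul_comm])

namespace ZMod

variable {N d n : ℕ} [NeZero n]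

noncomputable def stdAddCharOfDvd (h : n ∣ N) : AddChar (ZMod N) ℂ :=
  stdAddChar.compAddMonoidHom (castHom h (ZMod n)).toAddMonoidHom

theorem stdAddCharOfDvd_apply (h : n ∣ N) (x : ZMod N) :
    stdAddCharOfDvd h x = stdAddChar (castHom h (ZMod n) x) := rfl

theorem stdAddCharOfDvd_natCast_eq_one_iff (h : n ∣ N) (x : ℕ) :
    stdAddCharOfDvd h (x : ZMod N) = 1 ↔ n ∣ x := by
  rw [stdAddCharOfDvd_apply, map_natCast, ← (stdAddChar (N := n)).map_zero_eq_one,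
    injective_stdAddChar.eq_iff, natCast_eq_zero_iff]

variable [NeZero N]

theorem castHom_eq_intCast_iff_dvd (h : d ∣ N) (x : ZMod N) (r : ℤ) :
    castHom h (ZMod d) x = r ↔ (d : ℤ) ∣ (x.val : ℤ) - r := by
  rw [castHom_apply, cast_eq_val, ← Int.cast_natCast, intCast_eq_intCast_iff_dvd_sub,
    dvd_sub_comm]

def residueClass (h : d ∣ N) (a : ZMod d) : Finset (ZMod N) :=
  univ.filter fun x => castHom h (ZMod d) x = a

theorem add_mem_residueClass_iff (h : d ∣ N) (a : ZMod d) (x : ZMod N) :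
    x + d ∈ residueClass h a ↔ x ∈ residueClass h a := by
  simp only [residueClass, mem_filter, mem_univ, true_and, map_add, map_natCast, natCast_self,
    add_zero]

theorem sum_stdAddCharOfDvd_eq_zero (hn : n ≠ 1) (h : n ∣ N) :
    ∑ x, stdAddCharOfDvd h x = 0 :=
  AddChar.sum_eq_zero_of_add_mem_iff _ (g := ((1 : ℕ) : ZMod N)) (by simp) <| by
    rwa [Ne, stdAddCharOfDvd_natCast_eq_one_iff, Nat.dvd_one]

theorem sum_stdAddCharOfDvd_residueClass_eq_zero (h : n ∣ N) (hd : d ∣ N) (hnd : ¬ n ∣ d)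
    (a : ZMod d) : ∑ x ∈ residueClass hd a, stdAddCharOfDvd h x = 0 :=
  AddChar.sum_eq_zero_of_add_mem_iff _ (add_mem_residueClass_iff hd a) <| by
    rwa [Ne, stdAddCharOfDvd_natCast_eq_one_iff]

theorem sum_stdAddCharOfDvd_residueClass_self_ne_zero (h : n ∣ N) (a : ℤ) :
    ∑ x ∈ residueClass h (a : ZMod n), stdAddCharOfDvd h x ≠ 0 := by
  have hconst : ∀ x ∈ residueClass h (a : ZMod n),
      stdAddCharOfDvd h x = stdAddChar (a : ZMod n) :=
    fun x hx => by rw [stdAddCharOfDvd_apply, (mem_filter.mp hx).2]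
  have hmem : (a : ZMod N) ∈ residueClass h (a : ZMod n) := by
    simp only [residueClass, mem_filter, mem_univ, true_and, map_intCast]
  rw [sum_congr rfl hconst, sum_const, nsmul_eq_mul]
  exact mul_ne_zero (Nat.cast_ne_zero.mpr (card_ne_zero_of_mem hmem))
    (AddChar.val_isUnit _ _).ne_zero

end ZMod

/-- In an exact covering system of `ℤ`, a modulus that does not properly divide any other
modulus appears at least twice. -/
theorem erdos_nondividing_modulus_repeats
    (s : ℕ) (d : Fin s → ℕ) (r : Fin s → ℤ)
    (hd : ∀ i, 1 < d i)
    (hpart : ∀ x : ℤ, ∃! i : Fin s, (d i : ℤ) ∣ x - r i)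
    (k : Fin s)
    (hk : ∀ j : Fin s, j ≠ k → ¬ (d k ∣ d j ∧ d k ≠ d j)) :
    ∃ j : Fin s, j ≠ k ∧ d j = d k := by
  by_contra! hcon
  have hndvd : ∀ j, j ≠ k → ¬ d k ∣ d j := fun j hj hdvd => hk j hj ⟨hdvd, (hcon j hj).symm⟩
  set N := ∏ i, d i
  have hdvdN : ∀ i, d i ∣ N := fun i => dvd_prod_of_mem d (mem_univ i)
  have : NeZero N := ⟨(prod_pos fun i _ => zero_lt_one.trans (hd i)).ne'⟩
  have : NeZero (d k) := ⟨(zero_lt_one.trans (hd k)).ne'⟩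
  have hcover : ∀ x : ZMod N, ∃! i, x ∈ ZMod.residueClass (hdvdN i) (r i : ZMod (d i)) := by
    intro x
    simpa only [ZMod.residueClass, mem_filter, mem_univ, true_and,
      ZMod.castHom_eq_intCast_iff_dvd] using hpart x.val
  have hsplit := sum_sum_of_existsUnique_mem _ hcover (ZMod.stdAddCharOfDvd (hdvdN k))
  rw [ZMod.sum_stdAddCharOfDvd_eq_zero (hd k).ne' (hdvdN k),
    sum_eq_single k (fun i _ hik => ZMod.sum_stdAddCharOfDvd_residueClass_eq_zero _ _
      (hndvd i hik) _) (by simp)] at hsplit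
  exact ZMod.sum_stdAddCharOfDvd_residueClass_self_ne_zero (hdvdN k) (r k) hsplit
end

section
/- If d_1·ℤ + r_1, …, d_s·ℤ + r_s is an exact covering system of ℤ, then the sum of the reciprocals 1/d_1 + ⋯ + 1/d_s equals 1. -/
/-!
Let `N = ∏ dᵢ`. The classes partition the `N` integers of `[0, N)`, and since `dᵢ ∣ N` the
`i`-th class meets this interval in exactly `N / dᵢ` points. Hence `∑ N / dᵢ = N`.
-/

open Finset

theorem Finset.sum_card_filter_eq_card_of_existsUnique {ι α : Type*} [Fintype ι]
    (S : Finset α) (P : ι → α → Prop) [∀ i, DecidablePred (P i)]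
    (h : ∀ x ∈ S, ∃! i, P i x) :
    ∑ i, #{x ∈ S | P i x} = #S := by
  classical
  calc ∑ i, #{x ∈ S | P i x}
      = ∑ x ∈ S, #{i | P i x} := by simp only [card_filter]; exact sum_comm
    _ = ∑ x ∈ S, 1 := sum_congr rfl fun x hx => (Fintype.existsUnique_iff_card_one _).1 (h x hx)
    _ = #S := (card_eq_sum_ones S).symm

theorem Int.card_Ico_filter_dvd_sub_of_dvd (a v : ℤ) {d N : ℕ} (hd : 0 < d) (hdN : d ∣ N) :
    #{x ∈ Ico a (a + N) | (d : ℤ) ∣ x - v} = N / d := by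
  obtain ⟨k, rfl⟩ := hdN
  have hcount := Int.Ico_filter_modEq_card a (a + ↑(d * k)) (Int.natCast_pos.2 hd) v
  simp only [Int.modEq_comm, Int.modEq_iff_dvd] at hcount
  rw [Nat.mul_div_cancel_left k hd, ← Nat.cast_inj (R := ℤ), hcount]
  have hshift : (((a + ↑(d * k) : ℤ) : ℚ) - v) / ((d : ℤ) : ℚ)
      = ((a : ℚ) - v) / ((d : ℤ) : ℚ) + ((k : ℤ) : ℚ) := by
    push_cast; field_simp; ring
  rw [hshift, Int.ceil_add_intCast]
  omega

theorem sum_one_div_eq_one_of_existsUnique_dvd_sub {ι : Type*} [Fintype ι]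
    (d : ι → ℕ) (r : ι → ℤ) (hd : ∀ i, 0 < d i)
    (hcover : ∀ x : ℤ, ∃! i, (d i : ℤ) ∣ x - r i) :
    ∑ i, (1 : ℚ) / d i = 1 := by
  classical
  obtain ⟨N, hN, hdN⟩ : ∃ N : ℕ, (N : ℚ) ≠ 0 ∧ ∀ i, d i ∣ N :=
    ⟨∏ i, d i, by simpa [prod_eq_zero_iff] using fun i => (hd i).ne',
      fun i => dvd_prod_of_mem d (mem_univ i)⟩
  have hcount : ∑ i, N / d i = N := by
    have := sum_card_filter_eq_card_of_existsUnique (Ico 0 (0 + (N : ℤ))) _ fun x _ => hcover x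
    rw [sum_congr rfl fun i _ => Int.card_Ico_filter_dvd_sub_of_dvd 0 (r i) (hd i) (hdN i)] at this
    simpa using this
  have hcountQ : ∑ i, (N : ℚ) / d i = N := by
    have := congrArg (Nat.cast : ℕ → ℚ) hcount
    push_cast [Nat.cast_div (hdN _) (Nat.cast_ne_zero.2 (hd _).ne')] at this
    exact this
  calc ∑ i, (1 : ℚ) / d i = (∑ i, (N : ℚ) / d i) / N := by
        rw [sum_div]; exact sum_congr rfl fun i _ => by field_simp
    _ = 1 := by rw [hcountQ, div_self hN]

/-- For an exact covering system of `ℤ`, the reciprocals of the moduli sum to `1`. -/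
theorem exact_cover_sum_reciprocals
    (s : ℕ) (d : Fin s → ℕ) (r : Fin s → ℤ)
    (hd : ∀ i, 1 ≤ d i)
    (hpart : ∀ x : ℤ, ∃! i : Fin s, (d i : ℤ) ∣ x - r i) :
    ∑ i : Fin s, (1 : ℚ) / (d i : ℚ) = 1 :=
  sum_one_div_eq_one_of_existsUnique_dvd_sub d r hd hpart
end

section
/- Let G be a group and H_1α_1, …, H_sα_s a coset partition of G where each H_i is a subgroup of finite index d_i. Then the sum of the reciprocals of the indices, ∑_{i=1}^s 1/d_i, equals 1. -/
/-!
The cosets `H i * α i` give a bijection `(Σ i, H i) ≃ G`, so in a finite group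
`∑ i, |H i| = |G|`, which is the claim after dividing by `|G| = |H i| * [G : H i]`.
In general, all `H i` contain the finite-index normal subgroup
`N = (⨅ i, H i).normalCore`, and the partition descends to one of the finite group
`G ⧸ N` with the same indices.
-/

namespace Subgroup

variable {G : Type*} [Group G] {ι : Type*}

noncomputable def sigmaEquivOfRightCosetPartition (H : ι → Subgroup G) (α : ι → G)
    (hpart : ∀ g : G, ∃! i, g * (α i)⁻¹ ∈ H i) : (Σ i, H i) ≃ G :=
  Equiv.ofBijective (fun p => (p.2 : G) * α p.1) <| by
    refine ⟨?_, fun g => ⟨⟨(hpart g).exists.choose, ⟨_, (hpart g).exists.choose_spec⟩⟩, by simp⟩⟩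
    rintro ⟨i, h, hh⟩ ⟨j, k, hk⟩ (hhk : h * α i = k * α j)
    obtain rfl : i = j := (hpart (h * α i)).unique (by simpa using hh) (by simpa [hhk] using hk)
    obtain rfl : h = k := mul_right_cancel hhk
    rfl

theorem sum_card_eq_card_of_rightCoset_partition [Fintype ι] [Finite G]
    (H : ι → Subgroup G) (α : ι → G) (hpart : ∀ g : G, ∃! i, g * (α i)⁻¹ ∈ H i) :
    ∑ i, Nat.card (H i) = Nat.card G := by
  rw [← Nat.card_sigma, Nat.card_congr (sigmaEquivOfRightCosetPartition H α hpart)]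

theorem sum_inv_index_eq_one_of_finite [Fintype ι] [Finite G]
    (H : ι → Subgroup G) (α : ι → G) (hpart : ∀ g : G, ∃! i, g * (α i)⁻¹ ∈ H i) :
    ∑ i, (1 : ℚ) / (H i).index = 1 := by
  have hG : (Nat.card G : ℚ) ≠ 0 := by exact_mod_cast Nat.card_pos.ne'
  have hterm : ∀ i, (1 : ℚ) / (H i).index = Nat.card (H i) / Nat.card G := fun i => by
    have hH : (Nat.card (H i) : ℚ) ≠ 0 := by exact_mod_cast Nat.card_pos.ne'
    rw [← (H i).card_mul_index, Nat.cast_mul, div_mul_cancel_left₀ hH, one_div]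
  simp_rw [hterm, ← Finset.sum_div, ← Nat.cast_sum,
    sum_card_eq_card_of_rightCoset_partition H α hpart, div_self hG]

theorem rightCoset_partition_map {Q : Type*} [Group Q] {f : G →* Q}
    (hf : Function.Surjective f) (H : ι → Subgroup G) (hker : ∀ i, f.ker ≤ H i) (α : ι → G)
    (hpart : ∀ g : G, ∃! i, g * (α i)⁻¹ ∈ H i) :
    ∀ q : Q, ∃! i, q * (f (α i))⁻¹ ∈ (H i).map f := by
  have hmem : ∀ i g, f g ∈ (H i).map f ↔ g ∈ H i := fun i g => by
    rw [← mem_comap, comap_map_eq_self (hker i)]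
  intro q
  obtain ⟨g, rfl⟩ := hf q
  simpa only [← map_inv, ← map_mul, hmem] using hpart g

theorem sum_inv_index_eq_one [Fintype ι] (H : ι → Subgroup G) (α : ι → G)
    (hfin : ∀ i, (H i).FiniteIndex) (hpart : ∀ g : G, ∃! i, g * (α i)⁻¹ ∈ H i) :
    ∑ i, (1 : ℚ) / (H i).index = 1 := by
  have : (⨅ i, H i).FiniteIndex := finiteIndex_iInf hfin
  let N := (⨅ i, H i).normalCore
  have hker : ∀ i, (QuotientGroup.mk' N).ker ≤ H i := fun i => by
    rw [QuotientGroup.ker_mk']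
    exact (normalCore_le _).trans (iInf_le H i)
  have hsurj := QuotientGroup.mk'_surjective N
  simpa only [index_map_eq _ hsurj (hker _)] using
    sum_inv_index_eq_one_of_finite _ _ (rightCoset_partition_map hsurj H hker α hpart)

end Subgroup

/-- For a coset partition of a group `G` by right cosets `H i * α i` of finite-index
subgroups, the reciprocals of the indices sum to `1`. -/
theorem coset_partition_sum_reciprocals
    {G : Type*} [Group G] (s : ℕ)
    (H : Fin s → Subgroup G) (α : Fin s → G)
    (hfin : ∀ i, (H i).FiniteIndex)
    (hpart : ∀ g : G, ∃! i : Fin s, g * (α i)⁻¹ ∈ H i) :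
    ∑ i : Fin s, (1 : ℚ) / ((H i).index : ℚ) = 1 :=
  Subgroup.sum_inv_index_eq_one H α hfin hpart
end

section
/- Let G be a group partitioned by finitely many right cosets H_1α_1, …, H_sα_s with s ≥ 2. Then each subgroup H_i has finite index in G. -/
open scoped Pointwise

namespace Subgroup

variable {G ι : Type*} [Group G] [Finite ι] {H : ι → Subgroup G}

/-- By Neumann's lemma the cosets of finite-index subgroups alone still cover `G`, so `g i` lies in
one of them; disjointness forces that coset to be `g i • H i` itself. -/
theorem finiteIndex_of_leftCoset_partition {g : ι → G}
    (hpart : ∀ x : G, ∃! i, x ∈ g i • (H i : Set G)) (i : ι) : (H i).FiniteIndex := by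
  classical
  have := Fintype.ofFinite ι
  have hcovers : ⋃ k ∈ Finset.univ, g k • (H k : Set G) = Set.univ :=
    Set.eq_univ_of_forall fun x => by simpa using (hpart x).exists
  obtain ⟨j, hj, hgj⟩ : ∃ j, (H j).FiniteIndex ∧ g i ∈ g j • (H j : Set G) := by
    simpa using (leftCoset_cover_filter_FiniteIndex hcovers).ge (Set.mem_univ (g i))
  obtain rfl : j = i := (hpart (g i)).unique hgj ((mem_leftCoset_iff _).2 (by simp))
  exact hj

theorem finiteIndex_of_rightCoset_partition {α : ι → G}
    (hpart : ∀ x : G, ∃! i, x ∈ MulOpposite.op (α i) • (H i : Set G)) (i : ι) :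
    (H i).FiniteIndex :=
  finiteIndex_of_leftCoset_partition (g := fun i => (α i)⁻¹)
    (fun x => by
      simpa only [mem_leftCoset_iff, mem_rightCoset_iff, SetLike.mem_coe, inv_inv,
        ← inv_mem_iff (x := _ * x), mul_inv_rev] using hpart x⁻¹) i

end Subgroup

theorem coset_partition_finite_index_general
    {G : Type*} [Group G] (s : ℕ)
    (H : Fin s → Subgroup G) (α : Fin s → G)
    (hpart : ∀ g : G, ∃! i : Fin s, g * (α i)⁻¹ ∈ H i) :
    ∀ i : Fin s, (H i).FiniteIndex :=
  Subgroup.finiteIndex_of_rightCoset_partition (α := α)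
    (fun g => by simpa only [mem_rightCoset_iff, SetLike.mem_coe] using hpart g)

/-- If a group `G` is partitioned by finitely many right cosets `H i * α i` (`s ≥ 2`),
then each subgroup `H i` has finite index in `G`. -/
theorem coset_partition_finite_index
    {G : Type*} [Group G] (s : ℕ) (hs : 2 ≤ s)
    (H : Fin s → Subgroup G) (α : Fin s → G)
    (hpart : ∀ g : G, ∃! i : Fin s, g * (α i)⁻¹ ∈ H i) :
    ∀ i : Fin s, (H i).FiniteIndex :=
  coset_partition_finite_index_general s H α hpart
end

section
/- Let H ≤ F_n (n ≥ 2) be of index d with Schreier graph transition matrix A of period h > 1. Then h divides d. -/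
/-!
A positive word in `H` traces a closed walk at the base coset, so its length is divisible by `h`.
Let `N` be the normal core of `H`. Since `a ^ [F_n : N]` lies in `H`, `h ∣ [F_n : N]`, so every
generator has finite order in `F_n ⧸ N × ℤ/h` under `g ↦ (gN, exponent sum of g mod h)`; hence
every element of `F_n` has the same image there as some positive word. Applied to `g ∈ H` this shows
that `H` lies in the kernel of the exponent sum mod `h`, a subgroup of index `h`, so
`h ∣ [F_n : H] = d`.
-/

open FreeGroup

theorem Subgroup.index_eq_card_of_mul_inv_mem_iff {G X : Type*} [Group G] (H : Subgroup G)
    {c : G → X} (hc_surj : Function.Surjective c) (hc : ∀ x y, c x = c y ↔ x * y⁻¹ ∈ H) :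
    H.index = Nat.card X := by
  have hrel : QuotientGroup.rightRel H = Setoid.ker c :=
    Setoid.ext fun x y => by
      rw [QuotientGroup.rightRel_apply, Setoid.ker_def, hc, ← inv_mem_iff]
      group
  rw [Subgroup.index, ← Nat.card_congr (QuotientGroup.quotientRightRelEquivQuotientLeftRel H), hrel]
  exact Nat.card_congr (Setoid.quotientKerEquivOfSurjective c hc_surj)

theorem Matrix.pow_length_apply_pos {G X ι : Type*} [Monoid G] [Fintype X] [DecidableEq X]
    (A : Matrix X X ℕ) (c : G → X) (g : ι → G) (hA : ∀ x a, 0 < A (c x) (c (x * g a)))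
    (w : List ι) (x : G) : 0 < (A ^ w.length) (c x) (c (x * (w.map g).prod)) := by
  induction w generalizing x with
  | nil => simp
  | cons a w ih =>
    rw [List.length_cons, pow_succ', Matrix.mul_apply, List.map_cons, List.prod_cons, ← mul_assoc]
    exact (Nat.mul_pos (hA x a) (ih (x * g a))).trans_le
      (Finset.single_le_sum (f := fun j => A (c x) j * (A ^ w.length) j _)
        (fun _ _ => Nat.zero_le _) (Finset.mem_univ _))

namespace FreeGroup

variable {α : Type*}

theorem exists_map_prod_eq {Q : Type*} [Group Q] (f : FreeGroup α →* Q)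
    (hf : ∀ a, IsOfFinOrder (f (of a))) (g : FreeGroup α) :
    ∃ w : List α, f (w.map of).prod = f g := by
  induction g using FreeGroup.induction_on with
  | C1 => exact ⟨[], by simp⟩
  | of a => exact ⟨[a], by simp⟩
  | inv_of a _ =>
    obtain ⟨k, hk⟩ :=
      (hf a).mem_powers_iff_mem_zpowers.2 (Subgroup.inv_mem _ (Subgroup.mem_zpowers _))
    exact ⟨List.replicate k a, by simpa using hk⟩
  | mul g₁ g₂ ih₁ ih₂ =>
    obtain ⟨w₁, hw₁⟩ := ih₁
    obtain ⟨w₂, hw₂⟩ := ih₂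
    exact ⟨w₁ ++ w₂, by simp [hw₁, hw₂]⟩

variable (α) in
def exponentSumMod (h : ℕ) : FreeGroup α →* Multiplicative (ZMod h) :=
  FreeGroup.lift fun _ => Multiplicative.ofAdd 1

theorem exponentSumMod_map_of_prod (h : ℕ) (w : List α) :
    exponentSumMod α h (w.map of).prod = Multiplicative.ofAdd (w.length : ZMod h) := by
  simp [exponentSumMod, map_list_prod, List.map_map, Function.comp_def, ← ofAdd_nsmul]

theorem exponentSumMod_surjective [Nonempty α] (h : ℕ) :
    Function.Surjective (exponentSumMod α h) := by
  intro x
  obtain ⟨z, hz⟩ := ZMod.intCast_surjective x.toAdd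
  exact ⟨of (Classical.arbitrary α) ^ z, by simp [exponentSumMod, ← ofAdd_zsmul, hz]⟩

theorem index_ker_exponentSumMod [Nonempty α] (h : ℕ) : (exponentSumMod α h).ker.index = h := by
  rw [Subgroup.index_ker, MonoidHom.range_eq_top.2 (exponentSumMod_surjective h),
    Subgroup.card_top, Nat.card_congr Multiplicative.toAdd, Nat.card_zmod]

theorem le_ker_exponentSumMod (H : Subgroup (FreeGroup α)) [H.FiniteIndex] (h : ℕ)
    (hH : ∀ w : List α, (w.map of).prod ∈ H → h ∣ w.length) : H ≤ (exponentSumMod α h).ker := by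
  set K := H.normalCore.index
  have hK : 0 < K := Nat.pos_of_ne_zero Subgroup.FiniteIndex.index_ne_zero
  let f := (QuotientGroup.mk' H.normalCore).prod (exponentSumMod α h)
  have hf (a : α) : IsOfFinOrder (f (of a)) := by
    have hpow : of a ^ K ∈ H.normalCore := H.normalCore.pow_index_mem _
    have hhK : h ∣ K := by simpa using hH (List.replicate K a) (by simpa using H.normalCore_le hpow)
    refine isOfFinOrder_iff_pow_eq_one.2 ⟨K, hK, Prod.ext ?_ ?_⟩
    · exact (QuotientGroup.eq_one_iff _).2 hpow
    · simpa [f, exponentSumMod, ← ofAdd_nsmul] using (ZMod.natCast_eq_zero_iff K h).2 hhK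
  intro g hg
  obtain ⟨w, hw⟩ := exists_map_prod_eq f hf g
  simp only [f, MonoidHom.prod_apply, Prod.ext_iff, QuotientGroup.mk'_apply, QuotientGroup.eq] at hw
  have hwH : (w.map of).prod ∈ H := by
    simpa using H.mul_mem hg (H.inv_mem (H.normalCore_le hw.1))
  rw [MonoidHom.mem_ker, ← hw.2, exponentSumMod_map_of_prod, ofAdd_eq_one,
    ZMod.natCast_eq_zero_iff]
  exact hH w hwH

end FreeGroup

theorem schreier_period_divides_index_general
    (n d : ℕ) (hn : 2 ≤ n)
    (H : Subgroup (FreeGroup (Fin n)))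
    (c : FreeGroup (Fin n) → Fin d)
    (hcsurj : Function.Surjective c)
    (hc : ∀ x y : FreeGroup (Fin n), c x = c y ↔ x * y⁻¹ ∈ H)
    (A : Matrix (Fin d) (Fin d) ℕ)
    (hA : ∀ i j, A i j =
      Set.ncard {a : Fin n | ∃ g, c g = i ∧ c (g * FreeGroup.of a) = j})
    (h : ℕ)
    (hdvd : ∀ m : ℕ, 0 < m → 0 < (A ^ m) (c 1) (c 1) → h ∣ m) :
    h ∣ d := by
  have hindex : H.index = d := by
    simpa using H.index_eq_card_of_mul_inv_mem_iff hcsurj hc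
  have : H.FiniteIndex := ⟨hindex ▸ (c 1).pos.ne'⟩
  have hedge (x : FreeGroup (Fin n)) (a : Fin n) : 0 < A (c x) (c (x * of a)) := by
    rw [hA]
    exact (Set.ncard_pos (Set.toFinite _)).2 ⟨a, x, rfl, rfl⟩
  have hclosed (w : List (Fin n)) (hw : (w.map of).prod ∈ H) : h ∣ w.length := by
    obtain hw0 | hwpos := w.length.eq_zero_or_pos
    · simp [hw0]
    refine hdvd _ hwpos ?_
    simpa [(hc _ 1).2 (by simpa using hw)] using A.pow_length_apply_pos c of hedge w 1
  have : Nonempty (Fin n) := ⟨⟨0, by omega⟩⟩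
  simpa [index_ker_exponentSumMod, hindex] using
    Subgroup.index_dvd_of_le (le_ker_exponentSumMod H h hclosed)

/-- If the transition matrix of the Schreier graph of `H ≤ F_n` (`n ≥ 2`) of index `d`
has period `h > 1`, then `h` divides `d`. The period is characterised as the gcd of
all `m ≥ 1` with `(A ^ m)_{ii} > 0` at the basepoint. -/
theorem schreier_period_divides_index
    (n d : ℕ) (hn : 2 ≤ n)
    (H : Subgroup (FreeGroup (Fin n)))
    (c : FreeGroup (Fin n) → Fin d)
    (hcsurj : Function.Surjective c)
    (hc : ∀ x y : FreeGroup (Fin n), c x = c y ↔ x * y⁻¹ ∈ H)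
    (A : Matrix (Fin d) (Fin d) ℕ)
    (hA : ∀ i j, A i j =
      Set.ncard {a : Fin n | ∃ g, c g = i ∧ c (g * FreeGroup.of a) = j})
    (h : ℕ) (hh1 : 1 < h)
    (hdvd : ∀ m : ℕ, 0 < m → 0 < (A ^ m) (c 1) (c 1) → h ∣ m)
    (hgcd : ∀ e : ℕ, (∀ m : ℕ, 0 < m → 0 < (A ^ m) (c 1) (c 1) → e ∣ m) → e ∣ h) :
    h ∣ d :=
  schreier_period_divides_index_general n d hn H c hcsurj hc A hA h hdvd
end

section
/- Let {H_iα_i}_{i=1}^s be a coset partition of F_n (n ≥ 2) with each H_i of index d_i > 1, and let h_i be the period of the transition matrix of the Schreier graph of H_i. If h := max_i h_i > 1, then there exist j ≠ k with h_j = h_k = h. -/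
/-!
Let `a_i(m)` count the positive words of length `m` that lie in `H_i α_i`, i.e. the walks of
length `m` from `H_i` to `H_i α_i` in the Schreier graph of `H_i`, whose transition matrix `A_i`
has all row sums `n`. As the cosets partition `F_n`, `∑ i, a_i(m) = n ^ m`, so the generating
functions `M_i(z) = ∑ a_i(m) z^m = ((1 - z A_i)⁻¹)_{H_i, H_i α_i}` add up to `(1 - n z)⁻¹`.

Let `ζ` be a primitive `h_k`-th root of unity and `z = t ζ⁻¹ / n` with `t → 1⁻`. If `n ζ` is an
eigenvalue of `A_j`, an eigenvector must get multiplied by `ζ` along every edge, so `h_k` divides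
every return time and `h_j = h_k`. Otherwise `M_j` is continuous at `ζ⁻¹ / n`. If this happened
for every `j ≠ k`, then `M_k = (1 - n z)⁻¹ - ∑_{j ≠ k} M_j` would stay bounded. But the walk
lengths counted by `a_k` all lie in one residue class modulo `h_k`, so `‖M_k(z)‖ = M_k(t / n)`,
which tends to infinity.
-/

open Finset Filter Topology

theorem List.foldl_replicate_eq_iterate {ι V : Type*} (step : V → ι → V) (a : ι) (k : ℕ) (p : V) :
    (List.replicate k a).foldl step p = (fun q => step q a)^[k] p := by
  induction k generalizing p with
  | zero => rfl
  | succ k ih => rw [List.replicate_succ, List.foldl_cons, ih, Function.iterate_succ_apply]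

section TransitionMatrix

variable {ι V : Type*} [Fintype ι] [Fintype V] [DecidableEq V] (step : V → ι → V)

def transitionMatrix : Matrix V V ℕ := fun p q => #{a | step p a = q}

theorem sum_transitionMatrix_smul {M : Type*} [AddCommMonoid M] (f : V → M) (p : V) :
    ∑ q, transitionMatrix step p q • f q = ∑ a, f (step p a) := by
  rw [← sum_fiberwise univ (step p)]
  refine sum_congr rfl fun q _ => ?_
  rw [sum_congr rfl fun a ha => by rw [(mem_filter.1 ha).2], sum_const]
  rfl

theorem transitionMatrix_pow_apply (m : ℕ) (p q : V) :
    (transitionMatrix step ^ m) p q = #{w : Fin m → ι | (List.ofFn w).foldl step p = q} := by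
  induction m generalizing p with
  | zero => by_cases h : p = q <;> simp [h]
  | succ m ih =>
    have hcons : ∀ (a : ι) (w : Fin m → ι),
        (Fin.consEquiv fun _ => ι) (a, w) = Fin.cons a w := fun _ _ => rfl
    rw [pow_succ', Matrix.mul_apply, card_filter, ← (Fin.consEquiv fun _ => ι).sum_comp,
      Fintype.sum_prod_type]
    simp only [hcons, List.ofFn_cons, List.foldl_cons, ← card_filter, ← ih]
    exact sum_transitionMatrix_smul step (fun r => (transitionMatrix step ^ m) r q) p

theorem sum_transitionMatrix_apply (p : V) : ∑ q, transitionMatrix step p q = Fintype.card ι :=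
  (card_eq_sum_card_fiberwise fun _ _ => mem_univ _).symm

theorem transitionMatrix_pow_apply_pos_iff {m : ℕ} {p q : V} :
    0 < (transitionMatrix step ^ m) p q ↔ ∃ l : List ι, l.length = m ∧ l.foldl step p = q := by
  rw [transitionMatrix_pow_apply, card_pos]
  constructor
  · rintro ⟨w, hw⟩
    exact ⟨List.ofFn w, List.length_ofFn, (mem_filter.1 hw).2⟩
  · rintro ⟨l, rfl, hl⟩
    exact ⟨l.get, by simpa [List.ofFn_get] using hl⟩

theorem mulVec_map_transitionMatrix {R : Type*} [NonAssocSemiring R] (v : V → R) (p : V) :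
    ((transitionMatrix step).map (Nat.cast : ℕ → R)).mulVec v p = ∑ a, v (step p a) := by
  simp only [Matrix.mulVec, dotProduct, Matrix.map_apply, ← nsmul_eq_mul]
  exact sum_transitionMatrix_smul step v p

end TransitionMatrix

theorem Matrix.pow_apply_mul_pow_apply_le {V : Type*} [Fintype V] [DecidableEq V]
    (A : Matrix V V ℕ) (m l : ℕ) (p q r : V) :
    (A ^ m) p q * (A ^ l) q r ≤ (A ^ (m + l)) p r := by
  rw [pow_add, Matrix.mul_apply]
  exact single_le_sum (f := fun x => (A ^ m) p x * (A ^ l) x r) (fun _ _ => Nat.zero_le _)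
    (mem_univ q)

theorem Matrix.modEq_of_pow_apply_pos {V : Type*} [Fintype V] [DecidableEq V]
    (A : Matrix V V ℕ) {h : ℕ} {u v : V} (hper : ∀ m, 0 < m → 0 < (A ^ m) u u → h ∣ m)
    {ℓ : ℕ} (hvu : 0 < (A ^ ℓ) v u) {m m' : ℕ} (hm : 0 < (A ^ m) u v)
    (hm' : 0 < (A ^ m') u v) : m ≡ m' [MOD h] := by
  have hdvd : ∀ m, 0 < (A ^ m) u v → h ∣ m + ℓ := fun m hm =>
    (m + ℓ).eq_zero_or_pos.elim (fun h0 => h0 ▸ dvd_zero h) fun hpos =>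
      hper _ hpos ((Nat.mul_pos hm hvu).trans_le (A.pow_apply_mul_pow_apply_le m ℓ u v u))
  exact Nat.ModEq.add_right_cancel' ℓ
    ((Nat.modEq_zero_iff_dvd.2 (hdvd m hm)).trans (Nat.modEq_zero_iff_dvd.2 (hdvd m' hm')).symm)

theorem eq_of_norm_le_of_sum_eq {E ι : Type*} [NormedAddCommGroup E] [NormedSpace ℝ E]
    [StrictConvexSpace ℝ E] [Fintype ι] {w : ι → E} {ξ : E} (hle : ∀ a, ‖w a‖ ≤ ‖ξ‖)
    (hsum : ∑ a, w a = Fintype.card ι • ξ) (a : ι) : w a = ξ := by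
  have : Nonempty ι := ⟨a⟩
  have hN : (Fintype.card ι : ℝ) ≠ 0 := Nat.cast_ne_zero.2 Fintype.card_ne_zero
  have hmean : ∑ k, (Fintype.card ι : ℝ)⁻¹ • w k = ξ := by
    rw [← smul_sum, hsum, ← Nat.cast_smul_eq_nsmul ℝ, smul_smul, inv_mul_cancel₀ hN, one_smul]
  by_cases hconst : ∀ b, w b = w a
  · rwa [sum_congr rfl fun b _ => by rw [hconst b], sum_const, card_univ,
      ← Nat.cast_smul_eq_nsmul ℝ, smul_smul, mul_inv_cancel₀ hN, one_smul] at hmean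
  · obtain ⟨b, hb⟩ := not_forall.1 hconst
    have := norm_sum_lt_of_strictConvexSpace (t := univ) (w := fun _ => (Fintype.card ι : ℝ)⁻¹)
      (fun _ _ => by positivity) (by simp [card_univ, hN]) (mem_univ b) (mem_univ a) hb
      (inv_ne_zero hN) (inv_ne_zero hN) fun k _ => hle k
    exact absurd (hmean ▸ this) (lt_irrefl _)

section StronglyConnected

variable {ι V : Type*} [Fintype ι] [Fintype V] [DecidableEq V] {step : V → ι → V}
  (hconn : ∀ p q : V, ∃ l : List ι, l.foldl step p = q)
include hconn

theorem exists_transitionMatrix_pow_apply_pos (p q : V) :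
    ∃ m, 0 < (transitionMatrix step ^ m) p q :=
  ⟨_, (transitionMatrix_pow_apply_pos_iff step).2 ⟨_, rfl, (hconn p q).choose_spec⟩⟩

theorem exists_pos_transitionMatrix_pow_apply_self_pos [Nonempty ι] (p : V) :
    ∃ m, 0 < m ∧ 0 < (transitionMatrix step ^ m) p p := by
  let a : ι := Classical.arbitrary ι
  obtain ⟨l, hl⟩ := hconn (step p a) p
  exact ⟨l.length + 1, l.length.succ_pos,
    (transitionMatrix_pow_apply_pos_iff step).2 ⟨a :: l, rfl, hl⟩⟩

omit [DecidableEq V] in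
theorem apply_step_eq_mul_of_sum_apply_step_eq {ζ : ℂ} (hζ : ‖ζ‖ = 1) {v : V → ℂ}
    (heig : ∀ p, ∑ a, v (step p a) = Fintype.card ι • (ζ * v p)) (p : V) (a : ι) :
    v (step p a) = ζ * v p := by
  have : Nonempty V := ⟨p⟩
  obtain ⟨p₀, hp₀⟩ := Finite.exists_max fun p => ‖v p‖
  -- Where `‖v‖` is maximal, `heig` is the equality case of the triangle inequality; in
  -- particular `‖v‖` stays maximal along every edge.
  have hstep : ∀ p, ‖v p‖ = ‖v p₀‖ → ∀ a, v (step p a) = ζ * v p := fun p hp =>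
    eq_of_norm_le_of_sum_eq (fun a => by rw [norm_mul, hζ, one_mul, hp]; exact hp₀ _) (heig p)
  have hmax : ∀ (l : List ι) p, ‖v p‖ = ‖v p₀‖ → ‖v (l.foldl step p)‖ = ‖v p₀‖ := by
    intro l
    induction l with
    | nil => exact fun _ hp => hp
    | cons a l ih => exact fun p hp => ih _ (by rw [hstep p hp, norm_mul, hζ, one_mul, hp])
  obtain ⟨l, rfl⟩ := hconn p₀ p
  exact hstep _ (hmax l p₀ rfl) a

theorem pow_eq_one_of_det_eq_zero [Nonempty ι] {ζ : ℂ} (hζ : ‖ζ‖ = 1)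
    (hdet : (1 - ((Fintype.card ι : ℂ) * ζ)⁻¹ •
      (transitionMatrix step).map (Nat.cast : ℕ → ℂ)).det = 0)
    {m : ℕ} {u : V} (hm : 0 < (transitionMatrix step ^ m) u u) : ζ ^ m = 1 := by
  obtain ⟨v, hv0, hv⟩ := Matrix.exists_mulVec_eq_zero_iff.2 hdet
  have hζ0 : ζ ≠ 0 := norm_ne_zero_iff.1 (hζ ▸ one_ne_zero)
  have hstep := apply_step_eq_mul_of_sum_apply_step_eq hconn hζ (v := v) fun p => by
    have := congrFun hv p
    simp only [Matrix.sub_mulVec, Matrix.one_mulVec, Matrix.smul_mulVec, Pi.sub_apply,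
      Pi.smul_apply, smul_eq_mul, Pi.zero_apply, mulVec_map_transitionMatrix] at this
    rw [nsmul_eq_mul]
    field_simp at this ⊢
    linear_combination -this
  have hwalk : ∀ (l : List ι) p, v (l.foldl step p) = ζ ^ l.length * v p := by
    intro l
    induction l with
    | nil => simp
    | cons a l ih => intro p; rw [List.foldl_cons, ih, hstep, List.length_cons]; ring
  obtain ⟨l, rfl, hl⟩ := (transitionMatrix_pow_apply_pos_iff step).1 hm
  obtain ⟨p, hp⟩ := Function.ne_iff.1 hv0
  obtain ⟨l', rfl⟩ := hconn u p
  have hu : v u ≠ 0 := fun h => hp (by rw [hwalk, h, mul_zero, Pi.zero_apply])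
  exact (mul_eq_right₀ hu).1 (hl ▸ hwalk l u).symm

end StronglyConnected

section Resolvent

attribute [local instance] Matrix.linftyOpNormedRing Matrix.linftyOpNormedAlgebra

theorem Matrix.hasSum_pow_apply_mul_pow {V 𝕜 : Type*} [Fintype V] [DecidableEq V] [RCLike 𝕜]
    {A : Matrix V V ℕ} {N : ℕ} (hrow : ∀ p, ∑ q, A p q = N) {z : 𝕜} (hz : ‖z‖ * N < 1)
    (p q : V) :
    HasSum (fun m => ((A ^ m) p q : 𝕜) * z ^ m) ((1 - z • A.map (Nat.cast : ℕ → 𝕜))⁻¹ p q) := by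
  have hA : ‖A.map (Nat.cast : ℕ → 𝕜)‖ ≤ N := by
    rw [Matrix.linfty_opNorm_def, ← NNReal.coe_natCast, NNReal.coe_le_coe]
    exact Finset.sup_le fun p _ => by simp [← hrow p]
  have hnorm : ‖z • A.map (Nat.cast : ℕ → 𝕜)‖ < 1 :=
    (norm_smul_le _ _).trans_lt (by nlinarith [norm_nonneg z])
  have h := hasSum_geom_series_inverse _ hnorm
  rw [← Matrix.nonsing_inv_eq_ringInverse] at h
  convert Pi.hasSum.mp (Pi.hasSum.mp h p) q using 1
  funext m
  have hpow : A.map (Nat.cast : ℕ → 𝕜) ^ m = (A ^ m).map Nat.cast :=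
    (map_pow (Nat.castRingHom 𝕜).mapMatrix A m).symm
  rw [smul_pow, Matrix.smul_apply, hpow, Matrix.map_apply, smul_eq_mul, mul_comm]

end Resolvent

theorem Matrix.tendsto_inv_one_sub_real_smul {V : Type*} [Fintype V] [DecidableEq V]
    (M : Matrix V V ℂ) {w : ℂ} (hdet : (1 - w • M).det ≠ 0) :
    Tendsto (fun t : ℝ => (1 - ((t : ℂ) * w) • M)⁻¹) (𝓝 1) (𝓝 (1 - w • M)⁻¹) := by
  have hcont : Continuous fun t : ℝ => 1 - ((t : ℂ) * w) • M := by fun_prop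
  have hinv : ContinuousAt Inv.inv (1 - w • M) := continuousAt_matrix_inv _ (by
    simpa only [Ring.inverse_eq_inv'] using continuousAt_inv₀ hdet)
  exact hinv.tendsto.comp (by simpa using hcont.tendsto 1)

theorem sum_inv_one_sub_smul_apply {κ : Type*} [Fintype κ] {V : κ → Type*}
    [∀ i, Fintype (V i)] [∀ i, DecidableEq (V i)] {A : (i : κ) → Matrix (V i) (V i) ℕ} {N : ℕ}
    (hrow : ∀ i p, ∑ q, A i p q = N) {u v : (i : κ) → V i}
    (hsum : ∀ m, ∑ i, (A i ^ m) (u i) (v i) = N ^ m) {z : ℂ} (hz : ‖z‖ * N < 1) :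
    ∑ i, (1 - z • (A i).map (Nat.cast : ℕ → ℂ))⁻¹ (u i) (v i) = (1 - N * z)⁻¹ := by
  have h := hasSum_sum (s := univ) fun i _ =>
    Matrix.hasSum_pow_apply_mul_pow (hrow i) hz (u i) (v i)
  simp_rw [← sum_mul, ← Nat.cast_sum, hsum, Nat.cast_pow, ← mul_pow] at h
  exact h.unique (hasSum_geometric_of_norm_lt_one (by rwa [norm_mul, Complex.norm_natCast,
    mul_comm]))

theorem norm_tsum_mul_pow_of_pow_eq (a : ℕ → ℕ) {x : ℝ} (hx : 0 ≤ x) {ω : ℂ} (hω : ‖ω‖ = 1)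
    {m₀ : ℕ} (hphase : ∀ m, a m ≠ 0 → ω ^ m = ω ^ m₀) :
    ‖∑' m, (a m : ℂ) * ((x : ℂ) * ω) ^ m‖ = ∑' m, (a m : ℝ) * x ^ m := by
  have hterm : ∀ m, (a m : ℂ) * ((x : ℂ) * ω) ^ m = ω ^ m₀ * ((a m * x ^ m : ℝ) : ℂ) := by
    intro m
    by_cases ha : a m = 0
    · simp [ha]
    · rw [mul_pow, ← hphase m ha]
      push_cast
      ring
  rw [tsum_congr hterm, tsum_mul_left, ← Complex.ofReal_tsum, norm_mul, norm_pow, hω, one_pow,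
    one_mul, Complex.norm_of_nonneg (tsum_nonneg fun m => by positivity)]

theorem Matrix.pow_mul_tsum_le_tsum {V : Type*} [Fintype V] [DecidableEq V] (A : Matrix V V ℕ)
    {x : ℝ} (hx : 0 ≤ x) {u q v : V} {ℓ : ℕ} (hqv : 0 < (A ^ ℓ) q v)
    (huq : Summable fun m => ((A ^ m) u q : ℝ) * x ^ m)
    (huv : Summable fun m => ((A ^ m) u v : ℝ) * x ^ m) :
    x ^ ℓ * ∑' m, ((A ^ m) u q : ℝ) * x ^ m ≤ ∑' m, ((A ^ m) u v : ℝ) * x ^ m := by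
  have hterm : ∀ m, ((A ^ m) u q : ℝ) * x ^ (m + ℓ) ≤ ((A ^ (m + ℓ)) u v : ℝ) * x ^ (m + ℓ) := by
    intro m
    have h := (Nat.le_mul_of_pos_right _ hqv).trans (A.pow_apply_mul_pow_apply_le m ℓ u q v)
    gcongr
  calc x ^ ℓ * ∑' m, ((A ^ m) u q : ℝ) * x ^ m
      = ∑' m, ((A ^ m) u q : ℝ) * x ^ (m + ℓ) := by
        rw [← tsum_mul_left]
        exact tsum_congr fun m => by ring
    _ ≤ ∑' m, ((A ^ (m + ℓ)) u v : ℝ) * x ^ (m + ℓ) :=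
        Summable.tsum_le_tsum hterm (by simpa only [pow_add, ← mul_assoc] using huq.mul_right _)
          ((summable_nat_add_iff ℓ).2 huv)
    _ ≤ ∑' m, ((A ^ m) u v : ℝ) * x ^ m := by
        rw [← huv.sum_add_tsum_nat_add ℓ]
        exact le_add_of_nonneg_left (sum_nonneg fun m _ => by positivity)

theorem Matrix.sum_pow_apply_eq_pow {V : Type*} [Fintype V] [DecidableEq V] {A : Matrix V V ℕ}
    {N : ℕ} (hrow : ∀ p, ∑ q, A p q = N) (m : ℕ) (p : V) : ∑ q, (A ^ m) p q = N ^ m := by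
  induction m generalizing p with
  | zero => simp [Matrix.one_apply]
  | succ m ih =>
    simp_rw [pow_succ', Matrix.mul_apply]
    rw [sum_comm]
    simp_rw [← mul_sum, ih, ← sum_mul, hrow]

section Growth

variable {V : Type*} [Fintype V] [DecidableEq V] {A : Matrix V V ℕ} {N : ℕ}
  (hrow : ∀ p, ∑ q, A p q = N) (hN : 0 < N) {v : V} (hreach : ∀ q, ∃ ℓ, 0 < (A ^ ℓ) q v)
include hrow hN hreach

theorem Matrix.exists_pos_mul_inv_one_sub_le_tsum (u : V) :
    ∃ c > 0, ∀ t ∈ Set.Ico (1 / 2 : ℝ) 1,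
      c * (1 - t)⁻¹ ≤ ∑' m, ((A ^ m) u v : ℝ) * (t / N) ^ m := by
  have : Nonempty V := ⟨u⟩
  have hN' : (0 : ℝ) < N := Nat.cast_pos.2 hN
  choose ℓ hℓ using hreach
  set B := ∑ q, ℓ q
  refine ⟨(2 * N : ℝ)⁻¹ ^ B / Fintype.card V, by positivity, fun t ⟨ht₀, ht₁⟩ => ?_⟩
  have hx₀ : (2 * N : ℝ)⁻¹ ≤ t / N := by
    rw [mul_inv, inv_mul_le_iff₀ (by norm_num), div_eq_mul_inv]
    nlinarith [inv_pos.2 hN']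
  have hx₁ : t / N ≤ 1 := (div_le_one hN').2 (by linarith [(Nat.one_le_cast (α := ℝ)).2 hN])
  have hsumm : ∀ p q, Summable fun m => ((A ^ m) p q : ℝ) * (t / N) ^ m := fun p q =>
    (Matrix.hasSum_pow_apply_mul_pow hrow (z := t / N)
      (by rw [Real.norm_eq_abs, abs_div, abs_of_pos hN', abs_of_nonneg (by linarith),
        div_mul_cancel₀ _ hN'.ne']; exact ht₁) p q).summable
  have htotal : ∑ q, ∑' m, ((A ^ m) u q : ℝ) * (t / N) ^ m = (1 - t)⁻¹ := by
    rw [← Summable.tsum_finsetSum fun q _ => hsumm u q]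
    simp_rw [← sum_mul, ← Nat.cast_sum, Matrix.sum_pow_apply_eq_pow hrow, Nat.cast_pow, ← mul_pow,
      mul_div_cancel₀ _ hN'.ne']
    exact tsum_geometric_of_lt_one (by linarith) ht₁
  have hq : ∀ q, (2 * N : ℝ)⁻¹ ^ B * ∑' m, ((A ^ m) u q : ℝ) * (t / N) ^ m ≤
      ∑' m, ((A ^ m) u v : ℝ) * (t / N) ^ m := fun q =>
    (mul_le_mul_of_nonneg_right ((pow_le_pow_left₀ (by positivity) hx₀ B).trans
      (pow_le_pow_of_le_one (by positivity) hx₁ (single_le_sum (fun _ _ => Nat.zero_le _)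
        (mem_univ q)))) (tsum_nonneg fun m => by positivity)).trans
      (A.pow_mul_tsum_le_tsum (by positivity) (hℓ q) (hsumm u q) (hsumm u v))
  have := sum_le_sum fun q (_ : q ∈ univ) => hq q
  rw [← mul_sum, htotal, sum_const, card_univ, nsmul_eq_mul] at this
  rwa [div_mul_eq_mul_div, div_le_iff₀' (by positivity)]

theorem Matrix.tendsto_tsum_pow_apply_mul_pow_atTop (u : V) :
    Tendsto (fun t : ℝ => ∑' m, ((A ^ m) u v : ℝ) * (t / N) ^ m) (𝓝[<] 1) atTop := by
  obtain ⟨c, hc, hle⟩ := Matrix.exists_pos_mul_inv_one_sub_le_tsum hrow hN hreach u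
  have hsub : Tendsto (fun t : ℝ => 1 - t) (𝓝[<] 1) (𝓝[>] 0) := by
    have h : Tendsto (fun t : ℝ => 1 - t) (𝓝 1) (𝓝 0) := by
      simpa using (continuous_sub_left (1 : ℝ)).tendsto 1
    exact tendsto_nhdsWithin_of_tendsto_nhds_of_eventually_within _
      (h.mono_left nhdsWithin_le_nhds)
      (eventually_nhdsWithin_of_forall fun t (ht : t < 1) => sub_pos.2 ht)
  exact tendsto_atTop_mono' _ (eventually_of_mem (Ioo_mem_nhdsLT (by norm_num : (1 / 2 : ℝ) < 1))
    fun t ht => hle t (Set.Ioo_subset_Ico_self ht))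
    ((tendsto_inv_nhdsGT_zero.comp hsub).const_mul_atTop hc)

end Growth

theorem norm_real_mul_inv_natCast_mul_mul {N : ℕ} (hN : N ≠ 0) {ζ : ℂ} (hζ : ‖ζ‖ = 1) (t : ℝ) :
    ‖(t : ℂ) * ((N : ℂ) * ζ)⁻¹‖ * N = |t| := by
  rw [norm_mul, norm_inv, norm_mul, hζ, Complex.norm_natCast, Complex.norm_real, mul_one,
    inv_mul_cancel_right₀ (Nat.cast_ne_zero.2 hN), Real.norm_eq_abs]

theorem norm_inv_one_sub_smul_apply {V : Type*} [Fintype V] [DecidableEq V] {A : Matrix V V ℕ}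
    {N : ℕ} (hN : 0 < N) (hrow : ∀ p, ∑ q, A p q = N) {u v : V} {ζ : ℂ} (hζ : ‖ζ‖ = 1)
    {m₀ : ℕ} (hphase : ∀ m, 0 < (A ^ m) u v → ζ ^ m = ζ ^ m₀) {t : ℝ} (ht : t ∈ Set.Ico 0 1) :
    ‖(1 - ((t : ℂ) * ((N : ℂ) * ζ)⁻¹) • A.map (Nat.cast : ℕ → ℂ))⁻¹ u v‖ =
      ∑' m, ((A ^ m) u v : ℝ) * (t / N) ^ m := by
  have htz : (t : ℂ) * ((N : ℂ) * ζ)⁻¹ = ((t / N : ℝ) : ℂ) * ζ⁻¹ := by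
    push_cast
    field_simp
  have hz := norm_real_mul_inv_natCast_mul_mul hN.ne' hζ t
  rw [← (Matrix.hasSum_pow_apply_mul_pow hrow (hz.trans_lt (abs_lt.2 ⟨by linarith [ht.1], ht.2⟩))
      u v).tsum_eq, htz, norm_tsum_mul_pow_of_pow_eq _ (div_nonneg ht.1 (Nat.cast_nonneg N))
      (by rw [norm_inv, hζ, inv_one]) fun m hm => by
        rw [inv_pow, inv_pow, hphase m (Nat.pos_of_ne_zero hm)]]

theorem exists_tendsto_inv_one_sub_smul_apply {κ : Type*} [Fintype κ] [DecidableEq κ]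
    {V : κ → Type*} [∀ i, Fintype (V i)] [∀ i, DecidableEq (V i)]
    {A : (i : κ) → Matrix (V i) (V i) ℕ} {N : ℕ} (hN : 0 < N) (hrow : ∀ i p, ∑ q, A i p q = N)
    {u v : (i : κ) → V i} (hsum : ∀ m, ∑ i, (A i ^ m) (u i) (v i) = N ^ m) {ζ : ℂ}
    (hζ : ‖ζ‖ = 1) (hζ1 : ζ ≠ 1) (k : κ)
    (hdet : ∀ j ≠ k, (1 - ((N : ℂ) * ζ)⁻¹ • (A j).map (Nat.cast : ℕ → ℂ)).det ≠ 0) :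
    ∃ L, Tendsto (fun t : ℝ =>
      (1 - ((t : ℂ) * ((N : ℂ) * ζ)⁻¹) • (A k).map (Nat.cast : ℕ → ℂ))⁻¹ (u k) (v k))
      (𝓝[<] 1) (𝓝 L) := by
  set F : (i : κ) → ℝ → ℂ := fun i t =>
    (1 - ((t : ℂ) * ((N : ℂ) * ζ)⁻¹) • (A i).map (Nat.cast : ℕ → ℂ))⁻¹ (u i) (v i)
  have hN' : (N : ℂ) ≠ 0 := Nat.cast_ne_zero.2 hN.ne'
  have hsplit : ∀ t ∈ Set.Ioo (-1 : ℝ) 1,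
      (1 - (t : ℂ) * ζ⁻¹)⁻¹ - ∑ j ∈ univ.erase k, F j t = F k t := fun t ht => by
    have hz := (norm_real_mul_inv_natCast_mul_mul hN.ne' hζ t).trans_lt (abs_lt.2 ht)
    rw [sub_eq_iff_eq_add, add_sum_erase univ (fun i => F i t) (mem_univ k),
      sum_inv_one_sub_smul_apply hrow hsum hz]
    field_simp
  refine ⟨(1 - ζ⁻¹)⁻¹ - ∑ j ∈ univ.erase k,
      (1 - ((N : ℂ) * ζ)⁻¹ • (A j).map (Nat.cast : ℕ → ℂ))⁻¹ (u j) (v j),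
    Tendsto.congr' (eventually_of_mem (Ioo_mem_nhdsLT (by norm_num)) hsplit)
      (Tendsto.mono_left (Tendsto.sub ?_ (tendsto_finsetSum _ fun j hj => ?_)) nhdsWithin_le_nhds)⟩
  · have h : Continuous fun t : ℝ => 1 - (t : ℂ) * ζ⁻¹ := by fun_prop
    exact (h.tendsto' 1 _ (by simp)).inv₀ (sub_ne_zero.2 (inv_ne_one.2 hζ1).symm)
  · exact tendsto_pi_nhds.1 (tendsto_pi_nhds.1
      (Matrix.tendsto_inv_one_sub_real_smul _ (hdet j (ne_of_mem_erase hj))) (u j)) (v j)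

theorem exists_ne_det_one_sub_smul_eq_zero {κ : Type*} [Fintype κ] [DecidableEq κ]
    {V : κ → Type*} [∀ i, Fintype (V i)] [∀ i, DecidableEq (V i)]
    {A : (i : κ) → Matrix (V i) (V i) ℕ} {N : ℕ} (hN : 0 < N) (hrow : ∀ i p, ∑ q, A i p q = N)
    {u v : (i : κ) → V i} (hsum : ∀ m, ∑ i, (A i ^ m) (u i) (v i) = N ^ m) {ζ : ℂ}
    (hζ : ‖ζ‖ = 1) (hζ1 : ζ ≠ 1) {k : κ} {m₀ : ℕ}
    (hphase : ∀ m, 0 < (A k ^ m) (u k) (v k) → ζ ^ m = ζ ^ m₀)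
    (hdiv : Tendsto (fun t : ℝ => ∑' m, ((A k ^ m) (u k) (v k) : ℝ) * (t / N) ^ m) (𝓝[<] 1)
      atTop) :
    ∃ j ≠ k, (1 - ((N : ℂ) * ζ)⁻¹ • (A j).map (Nat.cast : ℕ → ℂ)).det = 0 := by
  by_contra! hdet
  obtain ⟨L, hL⟩ := exists_tendsto_inv_one_sub_smul_apply hN hrow hsum hζ hζ1 k hdet
  refine not_tendsto_atTop_of_tendsto_nhds hL.norm (hdiv.congr' ?_)
  filter_upwards [Ioo_mem_nhdsLT one_pos] with t ht
  exact (norm_inv_one_sub_smul_apply hN (hrow k) hζ hphase (Set.Ioo_subset_Ico_self ht)).symm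

section CosetGraph

variable {G V ι : Type*} [Group G] {H : Subgroup G} {c : G → V}

theorem apply_mul_right_eq_of_apply_eq (hc : ∀ x y, c x = c y ↔ x * y⁻¹ ∈ H) {x y : G}
    (h : c x = c y) (z : G) : c (x * z) = c (y * z) := by
  rw [hc] at h ⊢
  simpa [mul_assoc] using h

noncomputable def cosetStep (hsurj : Function.Surjective c) (s : ι → G) (p : V) (a : ι) : V :=
  c (Function.surjInv hsurj p * s a)

variable (hc : ∀ x y, c x = c y ↔ x * y⁻¹ ∈ H) (hsurj : Function.Surjective c) (s : ι → G)
include hc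

theorem cosetStep_apply (g : G) (a : ι) : cosetStep hsurj s (c g) a = c (g * s a) :=
  apply_mul_right_eq_of_apply_eq hc (Function.surjInv_eq hsurj (c g)) (s a)

theorem foldl_cosetStep (l : List ι) (g : G) :
    l.foldl (cosetStep hsurj s) (c g) = c (g * (l.map s).prod) := by
  induction l generalizing g with
  | nil => simp
  | cons a l ih => rw [List.foldl_cons, cosetStep_apply hc, ih, List.map_cons, List.prod_cons,
      mul_assoc]

theorem cosetStep_injective (a : ι) : Function.Injective fun p => cosetStep hsurj s p a := by
  intro p q h
  obtain ⟨x, rfl⟩ := hsurj p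
  obtain ⟨y, rfl⟩ := hsurj q
  simp only [cosetStep_apply hc] at h
  simpa using apply_mul_right_eq_of_apply_eq hc h (s a)⁻¹

theorem exists_foldl_cosetStep_eq [Finite V] (hs : Subgroup.closure (Set.range s) = ⊤)
    (p q : V) : ∃ l : List ι, l.foldl (cosetStep hsurj s) p = q := by
  suffices h : ∀ g x, ∃ l : List ι, c (x * (l.map s).prod) = c (x * g) by
    obtain ⟨x, rfl⟩ := hsurj p
    obtain ⟨y, rfl⟩ := hsurj q
    obtain ⟨l, hl⟩ := h (x⁻¹ * y) x
    exact ⟨l, by rw [foldl_cosetStep hc, hl, mul_inv_cancel_left]⟩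
  intro g
  induction (hs ▸ Subgroup.mem_top g : g ∈ Subgroup.closure (Set.range s))
    using Subgroup.closure_induction'' with
  | mem _ h =>
    obtain ⟨a, rfl⟩ := h
    exact fun x => ⟨[a], by simp⟩
  | inv_mem _ h =>
    obtain ⟨a, rfl⟩ := h
    intro x
    -- Right multiplication by `s a` permutes the finite set `V`, so an iterate of it undoes it.
    obtain ⟨r, hr, hper⟩ := (cosetStep_injective hc hsurj s a).mem_periodicPts (c (x * (s a)⁻¹))
    obtain ⟨k, rfl⟩ := Nat.exists_eq_add_of_lt hr
    refine ⟨List.replicate k a, ?_⟩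
    rw [← foldl_cosetStep hc, List.foldl_replicate_eq_iterate]
    rw [Function.IsPeriodicPt, Function.IsFixedPt, zero_add, Function.iterate_succ_apply,
      cosetStep_apply hc, inv_mul_cancel_right] at hper
    exact hper
  | one => exact fun x => ⟨[], by simp⟩
  | mul g h _ _ hg hh =>
    intro x
    obtain ⟨l₁, hl₁⟩ := hg x
    obtain ⟨l₂, hl₂⟩ := hh (x * g)
    refine ⟨l₁ ++ l₂, ?_⟩
    rw [List.map_append, List.prod_append, ← mul_assoc,
      apply_mul_right_eq_of_apply_eq hc hl₁, hl₂, mul_assoc]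

theorem transitionMatrix_cosetStep_apply [Fintype ι] [Fintype V] [DecidableEq V] (p q : V) :
    transitionMatrix (cosetStep hsurj s) p q = {a | ∃ g, c g = p ∧ c (g * s a) = q}.ncard := by
  rw [transitionMatrix, ← Set.ncard_coe_finset]
  congr 1
  ext a
  simp only [coe_filter, mem_univ, true_and, Set.mem_ofPred_eq]
  constructor
  · exact fun h => ⟨_, Function.surjInv_eq hsurj p, h⟩
  · rintro ⟨g, rfl, hg⟩
    rw [cosetStep_apply hc, hg]

end CosetGraph

theorem sum_transitionMatrix_cosetStep_pow_apply {G ι κ : Type*} [Group G] [Fintype ι]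
    [Fintype κ] [DecidableEq κ] {V : κ → Type*} [∀ i, Fintype (V i)] [∀ i, DecidableEq (V i)]
    {H : κ → Subgroup G} {c : (i : κ) → G → V i} (hc : ∀ i x y, c i x = c i y ↔ x * y⁻¹ ∈ H i)
    (hsurj : ∀ i, Function.Surjective (c i)) (s : ι → G) {α : κ → G}
    (hpart : ∀ g, ∃! i, g * (α i)⁻¹ ∈ H i) (m : ℕ) :
    ∑ i, (transitionMatrix (cosetStep (hsurj i) s) ^ m) (c i 1) (c i (α i)) =
      Fintype.card ι ^ m := by
  have hfold : ∀ i (l : List ι), l.foldl (cosetStep (hsurj i) s) (c i 1) = c i (l.map s).prod :=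
    fun i l => by rw [foldl_cosetStep (hc i), one_mul]
  choose f hf using fun w : Fin m → ι => (hpart ((List.ofFn w).map s).prod).exists
  have hfiber : ∀ i, univ.filter (fun w : Fin m → ι =>
      (List.ofFn w).foldl (cosetStep (hsurj i) s) (c i 1) = c i (α i)) =
      univ.filter fun w => f w = i := fun i => filter_congr fun w _ => by
    rw [hfold, hc]
    exact ⟨fun h => (hpart _).unique (hf w) h, fun h => h ▸ hf w⟩
  simp_rw [transitionMatrix_pow_apply, hfiber]
  rw [← card_eq_sum_card_fiberwise fun _ _ => mem_univ _, card_univ, Fintype.card_fun,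
    Fintype.card_fin]

theorem max_period_repeats_general
    (n s : ℕ) (hn : 2 ≤ n)
    (H : Fin s → Subgroup (FreeGroup (Fin n))) (α : Fin s → FreeGroup (Fin n))
    (d : Fin s → ℕ)
    (hpart : ∀ g : FreeGroup (Fin n), ∃! i : Fin s, g * (α i)⁻¹ ∈ H i)
    (c : (i : Fin s) → FreeGroup (Fin n) → Fin (d i))
    (hcsurj : ∀ i, Function.Surjective (c i))
    (hc : ∀ (i : Fin s) (x y : FreeGroup (Fin n)), c i x = c i y ↔ x * y⁻¹ ∈ H i)
    (A : (i : Fin s) → Matrix (Fin (d i)) (Fin (d i)) ℕ)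
    (hA : ∀ (i : Fin s) (p q : Fin (d i)), A i p q =
      Set.ncard {a : Fin n | ∃ g, c i g = p ∧ c i (g * FreeGroup.of a) = q})
    (hp : Fin s → ℕ)
    (hpdvd : ∀ (i : Fin s) (m : ℕ), 0 < m → 0 < ((A i) ^ m) (c i 1) (c i 1) → hp i ∣ m)
    (hpgcd : ∀ (i : Fin s) (e : ℕ),
      (∀ m : ℕ, 0 < m → 0 < ((A i) ^ m) (c i 1) (c i 1) → e ∣ m) → e ∣ hp i)
    (k : Fin s) (hmax : ∀ i, hp i ≤ hp k) (hk : 1 < hp k) :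
    ∃ j : Fin s, j ≠ k ∧ hp j = hp k := by
  have : Nonempty (Fin n) := ⟨⟨0, by omega⟩⟩
  set step := fun i => cosetStep (hcsurj i) (FreeGroup.of (α := Fin n))
  obtain rfl : A = fun i => transitionMatrix (step i) := funext fun i => Matrix.ext fun p q =>
    (hA i p q).trans (transitionMatrix_cosetStep_apply (hc i) _ _ p q).symm
  have hconn : ∀ i p q, ∃ l : List (Fin n), l.foldl (step i) p = q := fun i =>
    exists_foldl_cosetStep_eq (hc i) (hcsurj i) _ (FreeGroup.closure_range_of _)
  have hrow : ∀ i p, ∑ q, transitionMatrix (step i) p q = n := fun i => by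
    simpa using sum_transitionMatrix_apply (step i)
  have hpos : ∀ i, 0 < hp i := fun i => by
    obtain ⟨m, hm, hmi⟩ := exists_pos_transitionMatrix_pow_apply_self_pos (hconn i) (c i 1)
    exact Nat.pos_of_ne_zero fun h => hm.ne' (Nat.eq_zero_of_zero_dvd (h ▸ hpdvd i m hm hmi))
  set ζ := Complex.exp (2 * Real.pi * Complex.I / (hp k))
  have hζ : IsPrimitiveRoot ζ (hp k) := Complex.isPrimitiveRoot_exp _ (hpos k).ne'
  have hζ₁ : ‖ζ‖ = 1 := hζ.norm'_eq_one (hpos k).ne'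
  obtain ⟨m₀, hm₀⟩ := exists_transitionMatrix_pow_apply_pos (hconn k) (c k 1) (c k (α k))
  obtain ⟨ℓ, hℓ⟩ := exists_transitionMatrix_pow_apply_pos (hconn k) (c k (α k)) (c k 1)
  have hphase : ∀ m, 0 < (transitionMatrix (step k) ^ m) (c k 1) (c k (α k)) →
      ζ ^ m = ζ ^ m₀ := fun m hm => by
    rw [pow_eq_pow_mod m hζ.pow_eq_one, pow_eq_pow_mod m₀ hζ.pow_eq_one]
    exact congrArg _ (Matrix.modEq_of_pow_apply_pos _ (hpdvd k) hℓ hm hm₀)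
  obtain ⟨j, hjk, hdet⟩ := exists_ne_det_one_sub_smul_eq_zero (u := fun i => c i 1)
    (v := fun i => c i (α i)) (by omega : 0 < n) hrow
    (by simpa using sum_transitionMatrix_cosetStep_pow_apply hc hcsurj FreeGroup.of hpart)
    hζ₁ (hζ.ne_one hk) hphase (Matrix.tendsto_tsum_pow_apply_mul_pow_atTop (hrow k) (by omega)
      (fun q => exists_transitionMatrix_pow_apply_pos (hconn k) q _) _)
  refine ⟨j, hjk, le_antisymm (hmax j) (Nat.le_of_dvd (hpos j) (hpgcd j _ fun m _ hm => ?_))⟩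
  exact (hζ.pow_eq_one_iff_dvd m).1
    (pow_eq_one_of_det_eq_zero (hconn j) hζ₁ (by simpa using hdet) hm)

/-- For a coset partition of the free group `F_n` (`n ≥ 2`), if the maximal period
`hp k` of the Schreier-graph transition matrices is greater than `1`, then it is
attained at least twice. -/
theorem max_period_repeats
    (n s : ℕ) (hn : 2 ≤ n)
    (H : Fin s → Subgroup (FreeGroup (Fin n))) (α : Fin s → FreeGroup (Fin n))
    (d : Fin s → ℕ) (hd : ∀ i, 1 < d i)
    (hpart : ∀ g : FreeGroup (Fin n), ∃! i : Fin s, g * (α i)⁻¹ ∈ H i)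
    (c : (i : Fin s) → FreeGroup (Fin n) → Fin (d i))
    (hcsurj : ∀ i, Function.Surjective (c i))
    (hc : ∀ (i : Fin s) (x y : FreeGroup (Fin n)), c i x = c i y ↔ x * y⁻¹ ∈ H i)
    (A : (i : Fin s) → Matrix (Fin (d i)) (Fin (d i)) ℕ)
    (hA : ∀ (i : Fin s) (p q : Fin (d i)), A i p q =
      Set.ncard {a : Fin n | ∃ g, c i g = p ∧ c i (g * FreeGroup.of a) = q})
    (hp : Fin s → ℕ)
    (hpdvd : ∀ (i : Fin s) (m : ℕ), 0 < m → 0 < ((A i) ^ m) (c i 1) (c i 1) → hp i ∣ m)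
    (hpgcd : ∀ (i : Fin s) (e : ℕ),
      (∀ m : ℕ, 0 < m → 0 < ((A i) ^ m) (c i 1) (c i 1) → e ∣ m) → e ∣ hp i)
    (k : Fin s) (hmax : ∀ i, hp i ≤ hp k) (hk : 1 < hp k) :
    ∃ j : Fin s, j ≠ k ∧ hp j = hp k :=
  max_period_repeats_general n s hn H α d hpart c hcsurj hc A hA hp hpdvd hpgcd k hmax hk
end

section
/- Let {H_iα_i}_{i=1}^s be a coset partition of F_n with periods h_i of the Schreier-graph transition matrices of the H_i. If some h_ℓ > 1 does not properly divide any other period h_i, then there exists j ≠ ℓ with h_j = h_ℓ. -/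
/-!
Let `P i m` be the probability that a uniformly random positive word of length `m` lies in the
right coset `H i α i`; since these cosets partition `F_n`, `∑ i, P i m = 1`. `P i m` is an entry
of the `m`-th power of the stochastic Schreier matrix of `H i`, which is irreducible of period
`hp i`. Hence `P i` vanishes off a single residue class mod `hp i`, and along every residue class
it converges (Doeblin's contraction for the `hp i`-step walk on a cyclic class), with a positive
limit on the class carrying `P ℓ`. The limits `μ i` are `hp i`-periodic and still sum to `1`.
Their Fourier coefficients at a primitive `hp ℓ`-th root of unity `ω` vanish for the constant `1`
and for every `μ j` with `ω ^ hp j ≠ 1`, but not for `μ ℓ`; so `hp ℓ` divides some other `hp j`,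
and then `hp j = hp ℓ` because `hp ℓ` divides no other period properly.
-/

open Finset Filter Topology Function Matrix

namespace Matrix

section Doeblin

variable {ι : Type*} [Fintype ι] [DecidableEq ι] {P : Matrix ι ι ℝ}

lemma mulVec_apply_le_iSup_sub (hP : P ∈ rowStochastic ℝ ι) (g : ι → ℝ) (u v : ι) :
    (P *ᵥ g) u ≤ (⨆ w, g w) - P u v * ((⨆ w, g w) - g v) := by
  set M := ⨆ w, g w
  have hM : ∀ w, 0 ≤ P u w * (M - g w) := fun w =>
    mul_nonneg (hP.1 u w) (sub_nonneg.2 (le_ciSup (Finite.bddAbove_range g) w))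
  have hsum : (P *ᵥ g) u = M - ∑ w, P u w * (M - g w) := by
    simp [mulVec, dotProduct, mul_sub, sum_sub_distrib, ← sum_mul,
      sum_row_of_mem_rowStochastic hP]
  linarith [single_le_sum (fun w _ => hM w) (mem_univ v)]

lemma iInf_add_le_mulVec_apply (hP : P ∈ rowStochastic ℝ ι) (g : ι → ℝ) (u v : ι) :
    (⨅ w, g w) + P u v * (g v - ⨅ w, g w) ≤ (P *ᵥ g) u := by
  set m := ⨅ w, g w
  have hm : ∀ w, 0 ≤ P u w * (g w - m) := fun w =>
    mul_nonneg (hP.1 u w) (sub_nonneg.2 (ciInf_le (Finite.bddBelow_range g) w))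
  have hsum : (P *ᵥ g) u = m + ∑ w, P u w * (g w - m) := by
    simp [mulVec, dotProduct, mul_sub, sum_sub_distrib, ← sum_mul,
      sum_row_of_mem_rowStochastic hP]
  linarith [single_le_sum (fun w _ => hm w) (mem_univ v)]

lemma mulVec_apply_le_iSup (hP : P ∈ rowStochastic ℝ ι) (g : ι → ℝ) (u : ι) :
    (P *ᵥ g) u ≤ ⨆ w, g w := by
  have := mul_nonneg (hP.1 u u) (sub_nonneg.2 (le_ciSup (Finite.bddAbove_range g) u))
  linarith [mulVec_apply_le_iSup_sub hP g u u]

lemma iInf_le_mulVec_apply (hP : P ∈ rowStochastic ℝ ι) (g : ι → ℝ) (u : ι) :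
    ⨅ w, g w ≤ (P *ᵥ g) u := by
  have := mul_nonneg (hP.1 u u) (sub_nonneg.2 (ciInf_le (Finite.bddBelow_range g) u))
  linarith [iInf_add_le_mulVec_apply hP g u u]

/-- Doeblin's argument: every `K` steps the oscillation `max - min` of `P ^ k *ᵥ g` shrinks by
the factor `1 - δ`, where `δ` is the least entry of the positive column. -/
theorem exists_tendsto_pow_mulVec_of_pos_column (hP : P ∈ rowStochastic ℝ ι) {K : ℕ} {v₀ : ι}
    (hK : ∀ u, 0 < (P ^ K) u v₀) (g : ι → ℝ) :
    ∃ c, (∀ u, Tendsto (fun k => (P ^ k *ᵥ g) u) atTop (𝓝 c)) ∧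
      (0 ≤ g → 0 < g v₀ → 0 < c) := by
  have : Nonempty ι := ⟨v₀⟩
  set G : ℕ → ι → ℝ := fun k => P ^ k *ᵥ g
  set Mx : ℕ → ℝ := fun k => ⨆ u, G k u
  set mn : ℕ → ℝ := fun k => ⨅ u, G k u
  have hG : ∀ j k, G (j + k) = P ^ j *ᵥ G k := fun j k => by
    simp only [G, pow_add, mulVec_mulVec]
  have hGMx : ∀ k u, G k u ≤ Mx k := fun k => le_ciSup (Finite.bddAbove_range _)
  have hmnG : ∀ k u, mn k ≤ G k u := fun k => ciInf_le (Finite.bddBelow_range _)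
  have hmnMx : ∀ k, mn k ≤ Mx k := fun k => (hmnG k v₀).trans (hGMx k v₀)
  have hMx : Antitone Mx := by
    intro k k' hkk'
    obtain ⟨j, rfl⟩ := exists_add_of_le hkk'
    refine ciSup_le fun u => ?_
    rw [add_comm, hG]
    exact mulVec_apply_le_iSup (pow_mem hP j) _ u
  have hmn : Monotone mn := by
    intro k k' hkk'
    obtain ⟨j, rfl⟩ := exists_add_of_le hkk'
    refine le_ciInf fun u => ?_
    rw [add_comm, hG]
    exact iInf_le_mulVec_apply (pow_mem hP j) _ u
  obtain ⟨u₀, hu₀⟩ := exists_eq_ciInf_of_finite (f := fun u => (P ^ K) u v₀)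
  set δ := ⨅ u, (P ^ K) u v₀
  have hδ : 0 < δ := hu₀ ▸ hK u₀
  have hδle : ∀ u, δ ≤ (P ^ K) u v₀ := ciInf_le (Finite.bddBelow_range _)
  have hcontract : ∀ k, Mx (k + K) - mn (k + K) ≤ (1 - δ) * (Mx k - mn k) := by
    intro k
    rw [add_comm]
    have hv₀ := hGMx k v₀
    have hv₀' := hmnG k v₀
    have hupper : Mx (K + k) ≤ Mx k - δ * (Mx k - G k v₀) := ciSup_le fun u => by
      rw [hG]
      nlinarith [mulVec_apply_le_iSup_sub (pow_mem hP K) (G k) u v₀, hδle u]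
    have hlower : mn k + δ * (G k v₀ - mn k) ≤ mn (K + k) := le_ciInf fun u => by
      rw [hG]
      nlinarith [iInf_add_le_mulVec_apply (pow_mem hP K) (G k) u v₀, hδle u]
    linarith
  have hMxlim : Tendsto Mx atTop (𝓝 (⨅ k, Mx k)) :=
    tendsto_atTop_ciInf hMx ⟨mn 0, by
      rintro _ ⟨k, rfl⟩; exact (hmn (Nat.zero_le k)).trans (hmnMx k)⟩
  have hmnbdd : BddAbove (Set.range mn) := ⟨Mx 0, by
    rintro _ ⟨k, rfl⟩; exact (hmnMx k).trans (hMx (Nat.zero_le k))⟩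
  have hmnlim : Tendsto mn atTop (𝓝 (⨆ k, mn k)) := tendsto_atTop_ciSup hmn hmnbdd
  have hle : ⨆ k, mn k ≤ ⨅ k, Mx k := le_of_tendsto_of_tendsto' hmnlim hMxlim hmnMx
  have hge : (⨅ k, Mx k) - ⨆ k, mn k ≤ (1 - δ) * ((⨅ k, Mx k) - ⨆ k, mn k) :=
    le_of_tendsto_of_tendsto' ((hMxlim.sub hmnlim).comp (tendsto_add_atTop_nat K))
      ((hMxlim.sub hmnlim).const_mul (1 - δ)) hcontract
  have heq : ⨅ k, Mx k = ⨆ k, mn k := by nlinarith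
  refine ⟨⨆ k, mn k, fun u => ?_, fun hg hgv => ?_⟩
  · exact tendsto_of_tendsto_of_tendsto_of_le_of_le hmnlim (heq ▸ hMxlim)
      (fun k => hmnG k u) (fun k => hGMx k u)
  · have hK' : δ * g v₀ ≤ mn K := le_ciInf fun u => by
      calc δ * g v₀ ≤ (P ^ K) u v₀ * g v₀ := mul_le_mul_of_nonneg_right (hδle u) hgv.le
        _ ≤ G K u := single_le_sum (f := fun w => (P ^ K) u w * g w)
            (fun w _ => mul_nonneg (pow_apply_nonneg hP.1 K u w) (hg w)) (mem_univ v₀)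
    exact (mul_pos hδ hgv).trans_le (hK'.trans (le_ciSup hmnbdd K))

end Doeblin

variable {S R : Type*} [Fintype S]

lemma pow_apply_pos_add [DecidableEq S] [Semiring R] [PartialOrder R] [IsStrictOrderedRing R]
    {A : Matrix S S R} (hA : ∀ u v, 0 ≤ A u v) {m m' : ℕ} {u v w : S}
    (h : 0 < (A ^ m) u v) (h' : 0 < (A ^ m') v w) : 0 < (A ^ (m + m')) u w := by
  rw [pow_add, mul_apply]
  exact (mul_pos h h').trans_le <| single_le_sum (f := fun x => (A ^ m) u x * (A ^ m') x w)
    (fun x _ => mul_nonneg (pow_apply_nonneg hA m u x) (pow_apply_nonneg hA m' x w))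
    (mem_univ v)

section Closed

variable [Semiring R] {C : Set S} [Fintype C] {P : Matrix S S R}

lemma submatrix_mulVec_of_closed (hC : ∀ u ∈ C, ∀ v ∉ C, P u v = 0) (g : S → R) (u : C) :
    (P.submatrix (↑) (↑) *ᵥ fun v : C => g v) u = (P *ᵥ g) u := by
  classical
  simp only [mulVec, dotProduct, submatrix_apply]
  rw [Finset.sum_set_coe (f := fun v => P u v * g v)]
  exact sum_subset (subset_univ _) fun v _ hv => by
    rw [hC u u.2 v (by simpa using hv), zero_mul]

lemma submatrix_pow_of_closed [DecidableEq S] (hC : ∀ u ∈ C, ∀ v ∉ C, P u v = 0) (k : ℕ) :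
    P.submatrix ((↑) : C → S) ((↑) : C → S) ^ k =
      (P ^ k).submatrix ((↑) : C → S) ((↑) : C → S) := by
  induction k with
  | zero => ext u v; simp [one_apply, Subtype.ext_iff]
  | succ k ih =>
    ext u v
    rw [pow_succ', ih, pow_succ']
    exact submatrix_mulVec_of_closed hC (fun w => (P ^ k) w v) u

end Closed

noncomputable def period [DecidableEq S] [Semiring R] [Preorder R] (Q : Matrix S S R) (b : S) :
    ℕ :=
  Nat.setGcd {m | 0 < (Q ^ m) b b}

section Irreducible

variable [DecidableEq S] {Q : Matrix S S ℝ}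

lemma period_pos (hQ : Q ∈ rowStochastic ℝ S) (hirr : ∀ u v, ∃ m, 0 < (Q ^ m) u v) (b : S) :
    0 < period Q b := by
  obtain ⟨v, -, hv⟩ : ∃ v ∈ univ, (0 : ℝ) < Q b v :=
    exists_lt_of_sum_lt (by simp [sum_row_of_mem_rowStochastic hQ b])
  obtain ⟨p, hp⟩ := hirr v b
  have hret : 0 < (Q ^ (1 + p)) b b := pow_apply_pos_add hQ.1 (by simpa using hv) hp
  refine Nat.pos_of_ne_zero fun h0 => ?_
  simpa using Nat.setGcd_eq_zero_iff.1 h0 hret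

lemma modEq_period_of_pow_apply_pos (hQ : ∀ u v, 0 ≤ Q u v)
    (hirr : ∀ u v, ∃ m, 0 < (Q ^ m) u v) (b : S) {u v : S} {m m' : ℕ}
    (hm : 0 < (Q ^ m) u v) (hm' : 0 < (Q ^ m') u v) : m ≡ m' [MOD period Q b] := by
  obtain ⟨p, hp⟩ := hirr b u
  obtain ⟨q, hq⟩ := hirr v b
  have hdvd : ∀ {m}, 0 < (Q ^ m) u v → p + m + q ≡ 0 [MOD period Q b] := fun hm =>
    Nat.modEq_zero_iff_dvd.2 <|
      Nat.setGcd_dvd_of_mem (pow_apply_pos_add hQ (pow_apply_pos_add hQ hp hm) hq)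
  exact ((hdvd hm).trans (hdvd hm').symm).add_right_cancel' q |>.add_left_cancel' p

lemma exists_forall_ge_pow_apply_self_pos (hQ : ∀ u v, 0 ≤ Q u v) (b : S) :
    ∃ N, ∀ m ≥ N, period Q b ∣ m → 0 < (Q ^ m) b b := by
  let returnTimes : AddSubmonoid ℕ :=
    { carrier := {m | 0 < (Q ^ m) b b}
      add_mem' := pow_apply_pos_add hQ
      zero_mem' := by simp }
  obtain ⟨N, hN⟩ := Nat.exists_mem_closure_of_ge {m | 0 < (Q ^ m) b b}
  exact ⟨N, fun m hm hdvd =>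
    (AddSubmonoid.closure_le (S := returnTimes)).2 subset_rfl (hN m hm hdvd)⟩

theorem exists_tendsto_pow_add_mul_period (hQ : Q ∈ rowStochastic ℝ S)
    (hirr : ∀ u v, ∃ m, 0 < (Q ^ m) u v) (b t : S) (m : ℕ) :
    ∃ c, Tendsto (fun k => (Q ^ (m + k * period Q b)) b t) atTop (𝓝 c) ∧
      (0 < (Q ^ m) b t → 0 < c) := by
  set h := period Q b
  -- The cyclic class `C` of `b` is closed under `Q ^ h`, and the `h`-step walk on `C`
  -- satisfies Doeblin's condition at `b`.
  set C : Set S := {u | ∃ p, h ∣ p ∧ 0 < (Q ^ p) b u}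
  have hbC : b ∈ C := ⟨0, dvd_zero h, by simp⟩
  have hclosed : ∀ k, ∀ u ∈ C, ∀ v ∉ C, (Q ^ (h * k)) u v = 0 := by
    rintro k u ⟨p, hp, hpu⟩ v hv
    refine le_antisymm (not_lt.1 fun hpos => hv ?_) (pow_apply_nonneg hQ.1 _ u v)
    exact ⟨p + h * k, dvd_add hp (dvd_mul_right h k), pow_apply_pos_add hQ.1 hpu hpos⟩
  have : Fintype C := Fintype.ofFinite C
  set W : Matrix C C ℝ := (Q ^ h).submatrix (↑) (↑)
  have hW : ∀ k, W ^ k = (Q ^ (h * k)).submatrix (↑) (↑) := fun k => by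
    rw [submatrix_pow_of_closed (by simpa using hclosed 1), pow_mul]
  have hWst : W ∈ rowStochastic ℝ C := by
    refine ⟨fun u v => pow_apply_nonneg hQ.1 h u v, funext fun u => ?_⟩
    have := submatrix_mulVec_of_closed (by simpa using hclosed 1) 1 u
    rwa [(pow_mem hQ h).2] at this
  obtain ⟨N, hN⟩ := exists_forall_ge_pow_apply_self_pos hQ.1 b
  choose q hq using fun u => hirr u b
  have hWK : ∀ u : C, 0 < (W ^ (N + univ.sup q)) u ⟨b, hbC⟩ := by
    rintro ⟨u, p, hp, hpu⟩
    have hqu : h ∣ q u := (Nat.dvd_add_right hp).1 <|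
      Nat.setGcd_dvd_of_mem (pow_apply_pos_add hQ.1 hpu (hq u))
    have hle : N + q u ≤ h * (N + univ.sup q) := by
      have := le_sup (f := q) (mem_univ u)
      nlinarith [period_pos hQ hirr b]
    obtain ⟨j, hj⟩ := exists_add_of_le ((Nat.le_add_left _ _).trans hle)
    rw [hW, submatrix_apply, hj]
    refine pow_apply_pos_add hQ.1 (hq u) (hN j (by omega) ?_)
    exact (Nat.dvd_add_right hqu).1 (hj ▸ dvd_mul_right h _)
  obtain ⟨c, hlim, hpos⟩ :=
    exists_tendsto_pow_mulVec_of_pos_column hWst hWK (fun v : C => (Q ^ m) v t)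
  refine ⟨c, (hlim ⟨b, hbC⟩).congr fun k => ?_, hpos fun v => pow_apply_nonneg hQ.1 m v t⟩
  rw [hW, submatrix_mulVec_of_closed (hclosed k) (fun v => (Q ^ m) v t), mulVec, add_comm,
    mul_comm, pow_add]
  rfl

end Irreducible

end Matrix

lemma Nat.setGcd_eq_of_forall_dvd {s : Set ℕ} {h : ℕ} (hdvd : ∀ m ∈ s, 0 < m → h ∣ m)
    (hgcd : ∀ e, (∀ m ∈ s, 0 < m → e ∣ m) → e ∣ h) : Nat.setGcd s = h :=
  Nat.dvd_antisymm (hgcd _ fun _ hm _ => Nat.setGcd_dvd_of_mem hm) <| Nat.dvd_setGcd_iff.2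
    fun m hm => (Nat.eq_zero_or_pos m).elim (fun h0 => h0 ▸ dvd_zero h) (hdvd m hm)

lemma Finset.sum_range_mul_eq_sum_sum {M : Type*} [AddCommMonoid M] (f : ℕ → M) (k h : ℕ) :
    ∑ m ∈ range (k * h), f m = ∑ j ∈ range k, ∑ y ∈ range h, f (j * h + y) := by
  induction k with
  | zero => simp
  | succ k ih => rw [add_mul, one_mul, sum_range_add, ih, sum_range_succ]

section RootsOfUnity

variable {K : Type*} [Field K] {f : ℕ → K} {h : ℕ} {ω : K}

lemma sum_range_pow_mul_of_periodic (hf : Periodic f h) (k : ℕ) :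
    ∑ m ∈ range (k * h), ω ^ m * f m =
      (∑ j ∈ range k, (ω ^ h) ^ j) * ∑ y ∈ range h, ω ^ y * f y := by
  rw [sum_range_mul_eq_sum_sum, sum_mul]
  refine sum_congr rfl fun j _ => ?_
  rw [mul_sum]
  refine sum_congr rfl fun y _ => ?_
  have hper : f (y + j * h) = f y := by simpa using hf.nat_mul j y
  rw [add_comm, hper, pow_add, ← pow_mul, mul_comm h j]
  ring

lemma sum_range_pow_mul_eq_zero (hf : Periodic f h) (hω : ω ^ h ≠ 1) {L : ℕ} (hL : ω ^ L = 1)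
    (hhL : h ∣ L) : ∑ m ∈ range L, ω ^ m * f m = 0 := by
  obtain ⟨k, rfl⟩ := hhL
  rw [mul_comm, sum_range_pow_mul_of_periodic hf, geom_sum_eq hω, ← pow_mul, hL]
  simp

lemma sum_range_pow_mul_of_support_modEq (hf : Periodic f h) (hh : 0 < h) (hω : ω ^ h = 1)
    {r : ℕ} (hr : ∀ m, f m ≠ 0 → m ≡ r [MOD h]) (k : ℕ) :
    ∑ m ∈ range (k * h), ω ^ m * f m = k * (ω ^ (r % h) * f r) := by
  have hinner : ∑ y ∈ range h, ω ^ y * f y = ω ^ (r % h) * f r := by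
    rw [sum_eq_single_of_mem (r % h) (mem_range.2 (Nat.mod_lt r hh)), hf.map_mod_nat]
    intro y hy hyr
    have : f y = 0 := by
      by_contra hfy
      exact hyr <| by simpa [Nat.ModEq, Nat.mod_eq_of_lt (mem_range.1 hy)] using hr y hfy
    rw [this, mul_zero]
  simp [sum_range_pow_mul_of_periodic hf, hω, hinner]

end RootsOfUnity

theorem exists_ne_dvd_of_sum_periodic_eq_one {ι : Type*} [Fintype ι] [DecidableEq ι]
    {h : ι → ℕ} (hh : ∀ i, 0 < h i) {μ : ι → ℕ → ℂ} (hμ : ∀ i, Periodic (μ i) (h i))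
    (hsum : ∀ m, ∑ i, μ i m = 1) {ℓ : ι} (hℓ : 1 < h ℓ) {r : ℕ}
    (hsupp : ∀ m, μ ℓ m ≠ 0 → m ≡ r [MOD h ℓ]) (hr : μ ℓ r ≠ 0) :
    ∃ j ≠ ℓ, h ℓ ∣ h j := by
  set L := ∏ i, h i
  have hL : ∀ i, h i ∣ L := fun i => dvd_prod_of_mem h (mem_univ i)
  obtain ⟨k, hk⟩ := hL ℓ
  have hω := Complex.isPrimitiveRoot_exp (h ℓ) (hh ℓ).ne'
  set ω := Complex.exp (2 * Real.pi * Complex.I / h ℓ)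
  have hωL : ω ^ L = 1 := (hω.pow_eq_one_iff_dvd L).2 (hL ℓ)
  set F : ι → ℂ := fun i => ∑ m ∈ range L, ω ^ m * μ i m
  have htotal : ∑ i, F i = 0 := by
    rw [sum_comm]
    simp only [← mul_sum, hsum]
    exact sum_range_pow_mul_eq_zero (h := 1) (fun _ => rfl) (by simpa using hω.ne_one hℓ) hωL
      (one_dvd L)
  have hFℓ : F ℓ ≠ 0 := by
    have hk0 : (k : ℂ) ≠ 0 := by
      have : 0 < L := prod_pos fun i _ => hh i
      exact_mod_cast (Nat.pos_of_mul_pos_left (hk ▸ this)).ne'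
    simp only [F, hk, mul_comm (h ℓ) k]
    rw [sum_range_pow_mul_of_support_modEq (hμ ℓ) (hh ℓ) hω.pow_eq_one hsupp]
    exact mul_ne_zero hk0 (mul_ne_zero (pow_ne_zero _ (Complex.exp_ne_zero _)) hr)
  obtain ⟨j, hj, hFj⟩ : ∃ j ∈ univ.erase ℓ, F j ≠ 0 := by
    refine exists_ne_zero_of_sum_ne_zero ?_
    rw [← add_sum_erase _ _ (mem_univ ℓ)] at htotal
    exact fun h0 => hFℓ (by simpa [h0] using htotal)
  refine ⟨j, ne_of_mem_erase hj, (hω.pow_eq_one_iff_dvd _).1 ?_⟩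
  by_contra hne
  exact hFj (sum_range_pow_mul_eq_zero (hμ j) hne hωL (hL j))

lemma Function.periodic_of_tendsto_add_mul {X : Type*} [TopologicalSpace X] [T2Space X]
    {P : ℕ → X} {μ : ℕ → X} {h : ℕ}
    (hμ : ∀ m, Tendsto (fun k => P (m + k * h)) atTop (𝓝 (μ m))) : Periodic μ h := fun m => by
  refine tendsto_nhds_unique (hμ (m + h)) <|
    ((hμ m).comp (tendsto_add_atTop_nat 1)).congr fun k => ?_
  simp only [Function.comp_apply]
  ring_nf

lemma sum_eq_one_of_tendsto_add_mul {ι : Type*} [Fintype ι] {P : ι → ℕ → ℝ} {h : ι → ℕ}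
    (hh : ∀ i, 0 < h i) {μ : ι → ℕ → ℝ}
    (hμ : ∀ i m, Tendsto (fun k => P i (m + k * h i)) atTop (𝓝 (μ i m)))
    (hsum : ∀ m, ∑ i, P i m = 1) (m : ℕ) : ∑ i, μ i m = 1 := by
  set L := ∏ i, h i
  have hlim : ∀ i, Tendsto (fun k => P i (m + k * L)) atTop (𝓝 (μ i m)) := fun i => by
    obtain ⟨c, hc⟩ := dvd_prod_of_mem h (mem_univ i)
    have hc0 : 0 < c := Nat.pos_of_mul_pos_left (hc ▸ prod_pos fun i _ => hh i)
    refine ((hμ i m).comp (tendsto_id.atTop_mul_const' hc0)).congr fun k => ?_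
    simp only [Function.comp_apply, id, L, hc]
    ring_nf
  refine tendsto_nhds_unique (tendsto_finsetSum _ fun i _ => hlim i) ?_
  simp only [hsum]
  exact tendsto_const_nhds

theorem exists_ne_period_dvd_of_sum_pow_apply_eq_one {ι : Type*} [Fintype ι] [DecidableEq ι]
    {S : ι → Type*} [∀ i, Fintype (S i)] [∀ i, DecidableEq (S i)]
    {Q : ∀ i, Matrix (S i) (S i) ℝ} (hQ : ∀ i, Q i ∈ rowStochastic ℝ (S i))
    (hirr : ∀ i u v, ∃ m, 0 < (Q i ^ m) u v) {b t : ∀ i, S i}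
    (hsum : ∀ m, ∑ i, (Q i ^ m) (b i) (t i) = 1) {ℓ : ι} (hℓ : 1 < period (Q ℓ) (b ℓ)) :
    ∃ j ≠ ℓ, period (Q ℓ) (b ℓ) ∣ period (Q j) (b j) := by
  choose μ hμ hμpos using fun i m =>
    exists_tendsto_pow_add_mul_period (hQ i) (hirr i) (b i) (t i) m
  obtain ⟨r, hr⟩ := hirr ℓ (b ℓ) (t ℓ)
  have hsupp : ∀ m, μ ℓ m ≠ 0 → m ≡ r [MOD period (Q ℓ) (b ℓ)] := by
    intro m hm
    obtain ⟨k, hk⟩ : ∃ k, (Q ℓ ^ (m + k * period (Q ℓ) (b ℓ))) (b ℓ) (t ℓ) ≠ 0 := by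
      by_contra! h0
      exact hm (tendsto_nhds_unique (hμ ℓ m) (by simp [h0]))
    have := modEq_period_of_pow_apply_pos (hQ ℓ).1 (hirr ℓ) (b ℓ)
      ((pow_apply_nonneg (hQ ℓ).1 _ _ _).lt_of_ne' hk) hr
    simpa [Nat.ModEq, Nat.add_mul_mod_self_right] using this
  have hpos : ∀ i, 0 < period (Q i) (b i) := fun i => period_pos (hQ i) (hirr i) (b i)
  refine exists_ne_dvd_of_sum_periodic_eq_one (μ := fun i m => (μ i m : ℂ)) hpos
    (fun i m => ?_) (fun m => ?_) hℓ (fun m hm => hsupp m (by exact_mod_cast hm)) ?_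
  · simp [periodic_of_tendsto_add_mul (P := fun m => (Q i ^ m) (b i) (t i)) (hμ i) m]
  · exact_mod_cast sum_eq_one_of_tendsto_add_mul hpos hμ hsum m
  · exact_mod_cast (hμpos ℓ r hr).ne'

lemma pow_apply_eq_card_words {M α S : Type*} [Monoid M] [Fintype α] [Fintype S] [DecidableEq S]
    {A : Matrix S S ℕ} {f : M → S} {gen : α → M}
    (hA : ∀ x v, A (f x) v = #{a | f (x * gen a) = v}) (m : ℕ) (x : M) (v : S) :
    (A ^ m) (f x) v = #{w : Fin m → α | f (x * (List.ofFn (gen ∘ w)).prod) = v} := by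
  induction m generalizing x with
  | zero => by_cases h : f x = v <;> simp [one_apply, h]
  | succ m ih =>
    have hfiber : ∑ u, A (f x) u * (A ^ m) u v = ∑ a, (A ^ m) (f (x * gen a)) v := by
      simp only [hA, card_eq_sum_ones, sum_mul, one_mul]
      rw [← sum_fiberwise univ (fun a => f (x * gen a)) (fun a => (A ^ m) (f (x * gen a)) v)]
      exact sum_congr rfl fun u _ => sum_congr rfl fun a ha => by rw [(mem_filter.1 ha).2]
    rw [pow_succ', mul_apply, hfiber]
    simp only [ih, card_filter]
    rw [← (Fin.consEquiv fun _ => α).sum_comp, Fintype.sum_prod_type]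
    simp [Fin.consEquiv, List.ofFn_succ, mul_assoc, comp_def]

section Schreier

variable {G S : Type*} [Group G] {H : Subgroup G} {c : G → S}

lemma map_mul_right_eq_of_eq (hc : ∀ x y, c x = c y ↔ x * y⁻¹ ∈ H) {x y : G}
    (hxy : c x = c y) (g : G) : c (x * g) = c (y * g) := by
  rw [hc] at hxy ⊢
  simpa [mul_assoc] using hxy

lemma exists_pos_pow_map_mul_pow_eq [Finite S] (hc : ∀ x y, c x = c y ↔ x * y⁻¹ ∈ H)
    (hsurj : Surjective c) (g : G) : ∃ k, 0 < k ∧ ∀ x, c (x * g ^ k) = c x := by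
  obtain ⟨i, j, hne, hij⟩ :=
    Finite.exists_ne_map_eq_of_infinite fun j (p : S) => c (surjInv hsurj p * g ^ j)
  wlog hlt : i < j generalizing i j
  · exact this j i hne.symm hij.symm (lt_of_le_of_ne (not_lt.1 hlt) hne.symm)
  obtain ⟨k, rfl⟩ := exists_add_of_le hlt.le
  have hshift : ∀ y, c (y * g ^ i) = c (y * g ^ (i + k)) := fun y => by
    have hy := surjInv_eq hsurj (c y)
    rw [← map_mul_right_eq_of_eq hc hy, ← map_mul_right_eq_of_eq hc hy]
    exact congrFun hij (c y)
  refine ⟨k, by omega, fun x => ?_⟩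
  simpa [pow_add, mul_assoc] using (hshift (x * (g ^ i)⁻¹)).symm

end Schreier

lemma exists_pow_apply_pos_map_mul {α S : Type*} [Fintype S] [DecidableEq S]
    {H : Subgroup (FreeGroup α)} {c : FreeGroup α → S} (hc : ∀ x y, c x = c y ↔ x * y⁻¹ ∈ H)
    (hsurj : Surjective c) {Q : Matrix S S ℝ} (hQ : ∀ u v, 0 ≤ Q u v)
    (hstep : ∀ x a, 0 < Q (c x) (c (x * FreeGroup.of a))) (g x : FreeGroup α) :
    ∃ m, 0 < (Q ^ m) (c x) (c (x * g)) := by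
  set Reach : FreeGroup α → Prop := fun g => ∀ x, ∃ m, 0 < (Q ^ m) (c x) (c (x * g))
  have hmul : ∀ {g g'}, Reach g → Reach g' → Reach (g * g') := fun hg hg' x => by
    obtain ⟨m, hm⟩ := hg x
    obtain ⟨m', hm'⟩ := hg' _
    exact ⟨m + m', by simpa [mul_assoc] using pow_apply_pos_add hQ hm hm'⟩
  have hof : ∀ a, Reach (FreeGroup.of a) := fun a x => ⟨1, by simpa using hstep x a⟩
  have hpow : ∀ a j, Reach (FreeGroup.of a ^ j) := fun a j => by
    induction j with
    | zero => exact fun x => ⟨0, by simp⟩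
    | succ j ih => rw [pow_succ]; exact hmul ih (hof a)
  induction g generalizing x with
  | C1 => exact ⟨0, by simp⟩
  | of a => exact hof a x
  | inv_of a _ =>
    -- `(of a)⁻¹` acts on `S` as the positive power `(of a) ^ k`.
    obtain ⟨k, hk, hck⟩ := exists_pos_pow_map_mul_pow_eq hc hsurj (FreeGroup.of a)
    obtain ⟨k, rfl⟩ := Nat.exists_eq_add_of_lt hk
    obtain ⟨m, hm⟩ := hpow a k x
    refine ⟨m, ?_⟩
    rwa [← hck (x * (FreeGroup.of a)⁻¹), mul_assoc, zero_add, pow_succ', inv_mul_cancel_left]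
  | mul g g' ih ih' => exact hmul ih ih' x

lemma apply_map_eq_card_of_ncard_eq {α S : Type*} [Fintype α] [DecidableEq S]
    {H : Subgroup (FreeGroup α)} {c : FreeGroup α → S} {A : Matrix S S ℕ}
    (hc : ∀ x y, c x = c y ↔ x * y⁻¹ ∈ H)
    (hA : ∀ p q, A p q = {a | ∃ g, c g = p ∧ c (g * FreeGroup.of a) = q}.ncard)
    (x : FreeGroup α) (q : S) : A (c x) q = #{a | c (x * FreeGroup.of a) = q} := by
  rw [hA, ← Set.ncard_coe_finset]
  congr 1
  ext a
  simp only [coe_filter, mem_univ, true_and]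
  exact ⟨fun ⟨g, hg, hgq⟩ => (map_mul_right_eq_of_eq hc hg _).symm.trans hgq,
    fun h => ⟨x, rfl, h⟩⟩

section SchreierWalk

variable {α S : Type*} [Fintype α] [Fintype S] [DecidableEq S]

/-- The random walk by uniformly chosen positive generators, when `A p q` counts the generators
leading from `p` to `q`. -/
noncomputable def schreierWalk (α : Type*) [Fintype α] (A : Matrix S S ℕ) : Matrix S S ℝ :=
  (Fintype.card α : ℝ)⁻¹ • A.map (↑)

lemma schreierWalk_pow_apply (A : Matrix S S ℕ) (m : ℕ) (p q : S) :
    (schreierWalk α A ^ m) p q = (A ^ m) p q / Fintype.card α ^ m := by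
  have hmap : A.map (Nat.cast : ℕ → ℝ) ^ m = (A ^ m).map (↑) := by
    simpa using (map_pow (Nat.castRingHom ℝ).mapMatrix A m).symm
  simp [schreierWalk, smul_pow, hmap, div_eq_inv_mul]

lemma schreierWalk_pow_apply_pos_iff [Nonempty α] {A : Matrix S S ℕ} {m : ℕ} {p q : S} :
    0 < (schreierWalk α A ^ m) p q ↔ 0 < (A ^ m) p q := by
  rw [schreierWalk_pow_apply, div_pos_iff_of_pos_right (by positivity), Nat.cast_pos]

variable {H : Subgroup (FreeGroup α)} {c : FreeGroup α → S} {A : Matrix S S ℕ}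

lemma schreierWalk_mem_rowStochastic [Nonempty α] (hsurj : Surjective c)
    (hA : ∀ x q, A (c x) q = #{a | c (x * FreeGroup.of a) = q}) :
    schreierWalk α A ∈ rowStochastic ℝ S := by
  refine mem_rowStochastic_iff_sum.2
    ⟨fun p q => by simp [schreierWalk]; positivity, fun p => ?_⟩
  obtain ⟨x, rfl⟩ := hsurj p
  have hrow : ∑ q, A (c x) q = Fintype.card α := by
    simp_rw [hA]
    exact (card_eq_sum_card_fiberwise (by simp)).symm
  simp [schreierWalk, ← mul_sum, ← Nat.cast_sum, hrow]

lemma schreierWalk_irreducible [Nonempty α] (hc : ∀ x y, c x = c y ↔ x * y⁻¹ ∈ H)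
    (hsurj : Surjective c) (hA : ∀ x q, A (c x) q = #{a | c (x * FreeGroup.of a) = q})
    (u v : S) : ∃ m, 0 < (schreierWalk α A ^ m) u v := by
  obtain ⟨x, rfl⟩ := hsurj u
  obtain ⟨y, rfl⟩ := hsurj v
  have hstep : ∀ x a, 0 < schreierWalk α A (c x) (c (x * FreeGroup.of a)) := fun x a => by
    simpa using (schreierWalk_pow_apply_pos_iff (m := 1)).2
      (by rw [pow_one, hA]; exact card_pos.2 ⟨a, by simp⟩)
  simpa using exists_pow_apply_pos_map_mul hc hsurj
    (schreierWalk_mem_rowStochastic hsurj hA).1 hstep (x⁻¹ * y) x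

lemma sum_schreierWalk_pow_apply_eq_one {ι : Type*} [Fintype ι] [Nonempty α] {S : ι → Type*}
    [∀ i, Fintype (S i)] [∀ i, DecidableEq (S i)] {H : ι → Subgroup (FreeGroup α)}
    {g₀ : ι → FreeGroup α} (hpart : ∀ g, ∃! i, g * (g₀ i)⁻¹ ∈ H i)
    {c : ∀ i, FreeGroup α → S i} (hc : ∀ i x y, c i x = c i y ↔ x * y⁻¹ ∈ H i)
    {A : ∀ i, Matrix (S i) (S i) ℕ}
    (hA : ∀ i x q, A i (c i x) q = #{a | c i (x * FreeGroup.of a) = q}) (m : ℕ) :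
    ∑ i, (schreierWalk α (A i) ^ m) (c i 1) (c i (g₀ i)) = 1 := by
  classical
  have hcount : ∑ i, (A i ^ m) (c i 1) (c i (g₀ i)) = Fintype.card α ^ m := by
    simp_rw [pow_apply_eq_card_words (hA _), one_mul, card_filter]
    rw [sum_comm]
    have hone : ∀ w : Fin m → α, ∑ i, (if c i (List.ofFn (FreeGroup.of ∘ w)).prod = c i (g₀ i)
        then 1 else 0) = 1 := fun w => by
      rw [← card_filter, ← Fintype.existsUnique_iff_card_one]
      simpa [hc] using hpart _
    simp [hone]
  simp_rw [schreierWalk_pow_apply, ← sum_div, ← Nat.cast_sum, hcount]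
  simp

end SchreierWalk

theorem nondividing_period_repeats_general
    (n s : ℕ) (hn : 1 ≤ n)
    (H : Fin s → Subgroup (FreeGroup (Fin n))) (α : Fin s → FreeGroup (Fin n))
    (d : Fin s → ℕ)
    (hpart : ∀ g : FreeGroup (Fin n), ∃! i : Fin s, g * (α i)⁻¹ ∈ H i)
    (c : (i : Fin s) → FreeGroup (Fin n) → Fin (d i))
    (hcsurj : ∀ i, Function.Surjective (c i))
    (hc : ∀ (i : Fin s) (x y : FreeGroup (Fin n)), c i x = c i y ↔ x * y⁻¹ ∈ H i)
    (A : (i : Fin s) → Matrix (Fin (d i)) (Fin (d i)) ℕ)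
    (hA : ∀ (i : Fin s) (p q : Fin (d i)), A i p q =
      Set.ncard {a : Fin n | ∃ g, c i g = p ∧ c i (g * FreeGroup.of a) = q})
    (hp : Fin s → ℕ)
    (hpdvd : ∀ (i : Fin s) (m : ℕ), 0 < m → 0 < ((A i) ^ m) (c i 1) (c i 1) → hp i ∣ m)
    (hpgcd : ∀ (i : Fin s) (e : ℕ),
      (∀ m : ℕ, 0 < m → 0 < ((A i) ^ m) (c i 1) (c i 1) → e ∣ m) → e ∣ hp i)
    (ℓ : Fin s) (hℓ : 1 < hp ℓ)
    (hnodvd : ∀ i : Fin s, i ≠ ℓ → ¬ (hp ℓ ∣ hp i ∧ hp ℓ ≠ hp i)) :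
    ∃ j : Fin s, j ≠ ℓ ∧ hp j = hp ℓ := by
  classical
  have : Nonempty (Fin n) := ⟨⟨0, hn⟩⟩
  have hAc : ∀ i x q, A i (c i x) q = #{a | c i (x * FreeGroup.of a) = q} :=
    fun i => apply_map_eq_card_of_ncard_eq (hc i) (hA i)
  have hperiod : ∀ i, period (schreierWalk (Fin n) (A i)) (c i 1) = hp i := fun i =>
    Nat.setGcd_eq_of_forall_dvd
      (fun m hm hm0 => hpdvd i m hm0 (schreierWalk_pow_apply_pos_iff.1 hm))
      (fun e he => hpgcd i e fun m hm0 hm => he m (schreierWalk_pow_apply_pos_iff.2 hm) hm0)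
  obtain ⟨j, hjℓ, hdvd⟩ := exists_ne_period_dvd_of_sum_pow_apply_eq_one
    (fun i => schreierWalk_mem_rowStochastic (hcsurj i) (hAc i))
    (fun i => schreierWalk_irreducible (hc i) (hcsurj i) (hAc i))
    (sum_schreierWalk_pow_apply_eq_one hpart hc hAc) (ℓ := ℓ) ((hperiod ℓ).symm ▸ hℓ)
  rw [hperiod, hperiod] at hdvd
  exact ⟨j, hjℓ, by_contra fun hne => hnodvd j hjℓ ⟨hdvd, Ne.symm hne⟩⟩

/-- For a coset partition of the free group `F_n`, if a period `hp ℓ > 1` does not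
properly divide any other period, then it is repeated. -/
theorem nondividing_period_repeats
    (n s : ℕ) (hn : 1 ≤ n)
    (H : Fin s → Subgroup (FreeGroup (Fin n))) (α : Fin s → FreeGroup (Fin n))
    (d : Fin s → ℕ) (hd : ∀ i, 1 < d i)
    (hpart : ∀ g : FreeGroup (Fin n), ∃! i : Fin s, g * (α i)⁻¹ ∈ H i)
    (c : (i : Fin s) → FreeGroup (Fin n) → Fin (d i))
    (hcsurj : ∀ i, Function.Surjective (c i))
    (hc : ∀ (i : Fin s) (x y : FreeGroup (Fin n)), c i x = c i y ↔ x * y⁻¹ ∈ H i)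
    (A : (i : Fin s) → Matrix (Fin (d i)) (Fin (d i)) ℕ)
    (hA : ∀ (i : Fin s) (p q : Fin (d i)), A i p q =
      Set.ncard {a : Fin n | ∃ g, c i g = p ∧ c i (g * FreeGroup.of a) = q})
    (hp : Fin s → ℕ)
    (hpdvd : ∀ (i : Fin s) (m : ℕ), 0 < m → 0 < ((A i) ^ m) (c i 1) (c i 1) → hp i ∣ m)
    (hpgcd : ∀ (i : Fin s) (e : ℕ),
      (∀ m : ℕ, 0 < m → 0 < ((A i) ^ m) (c i 1) (c i 1) → e ∣ m) → e ∣ hp i)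
    (ℓ : Fin s) (hℓ : 1 < hp ℓ)
    (hnodvd : ∀ i : Fin s, i ≠ ℓ → ¬ (hp ℓ ∣ hp i ∧ hp ℓ ≠ hp i)) :
    ∃ j : Fin s, j ≠ ℓ ∧ hp j = hp ℓ :=
  nondividing_period_repeats_general n s hn H α d hpart c hcsurj hc A hA hp hpdvd hpgcd ℓ hℓ hnodvd
end

section
/- Let {H_iα_i}_{i=1}^s be a coset partition of F_n (n ≥ 2) with indices d_i > 1 and Schreier-graph periods h_i. Suppose exactly one value h > 1 occurs among the periods, with r repetitions, and h < r ≤ 2(h−1). Then the partition has multiplicity: there exist j ≠ k with d_j = d_k. -/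
/-!
Every positive word of length `m` in the generators lies in exactly one coset `H i * α i`, so
`∑ i, (A i ^ m) (H i) (H i α i) = n ^ m`. Twist by an `h`-th root of unity `μ ≠ 1` and take Cesàro
means. For the Schreier graph of `H i`, the average `B` of the permutation operators of the
generators is a contraction of `ℓ²`, and the twisted means are matrix coefficients of the Birkhoff
averages of `μ • B`; by von Neumann's mean ergodic theorem they converge to the coefficient of the
projection onto the fixed space of `μ • B`. By strict convexity a fixed vector satisfies
`x (p · a) = μ⁻¹ x p`, so the fixed space is spanned by `q ↦ μ^(-t q)`, `t q` the length of a walk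
from `H i` to `q`, if `μ ^ h_i = 1`, and is zero otherwise. As the means of `μ ^ m` tend to `0`,
`∑_{h_i = h} μ ^ t_i / d_i = 0` for all such `μ`, and Fourier inversion on `ℤ/h` shows that the sums
of `1 / d_i` over the `h` residue classes of `t_i` are all equal, hence all classes are nonempty.
Since `r ≤ 2 (h - 1)`, two of the classes are singletons `{j}` and `{k}`, so that `d j = d k`.
-/

open Finset Filter Topology

namespace CosetPartition

section TransitionCount

variable {ι V : Type*} [Fintype ι] [Fintype V] [DecidableEq V]

def transitionCount (σ : ι → Equiv.Perm V) : Matrix V V ℕ :=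
  Matrix.of fun p q => #{a | σ a p = q}

lemma transitionCount_pow_succ_apply (σ : ι → Equiv.Perm V) (m : ℕ) (p q : V) :
    (transitionCount σ ^ (m + 1)) p q = ∑ a, (transitionCount σ ^ m) (σ a p) q := by
  simp only [pow_succ', Matrix.mul_apply, transitionCount, Matrix.of_apply, card_filter,
    sum_mul, ite_mul, one_mul, zero_mul]
  rw [sum_comm]
  simp

lemma pow_add_apply_pos {M : Matrix V V ℕ} {m k : ℕ} {p q r : V}
    (hpq : 0 < (M ^ m) p q) (hqr : 0 < (M ^ k) q r) : 0 < (M ^ (m + k)) p r := by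
  rw [pow_add, Matrix.mul_apply]
  exact sum_pos_iff.mpr ⟨q, mem_univ q, Nat.mul_pos hpq hqr⟩

lemma transitionCount_pow_succ_apply_pos_iff {σ : ι → Equiv.Perm V} {m : ℕ} {p q : V} :
    0 < (transitionCount σ ^ (m + 1)) p q ↔ ∃ a, 0 < (transitionCount σ ^ m) (σ a p) q := by
  simp [transitionCount_pow_succ_apply, sum_pos_iff]

lemma transitionCount_pow_apply_perm_pow_pos (σ : ι → Equiv.Perm V) (a : ι) (k : ℕ) (p : V) :
    0 < (transitionCount σ ^ k) p ((σ a ^ k) p) := by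
  induction k generalizing p with
  | zero => simp
  | succ k ih =>
    rw [pow_succ (σ a), Equiv.Perm.mul_apply]
    exact transitionCount_pow_succ_apply_pos_iff.mpr ⟨a, ih (σ a p)⟩

end TransitionCount

section SchreierGraph

variable {ι V : Type*} {K : Subgroup (FreeGroup ι)} {c : FreeGroup ι → V}

lemma exists_perm_of_coset_coding [Finite V] (hsurj : Function.Surjective c)
    (hc : ∀ x y, c x = c y ↔ x * y⁻¹ ∈ K) :
    ∃ σ : ι → Equiv.Perm V, ∀ g a, c (g * FreeGroup.of a) = σ a (c g) := by
  have hc_mul : ∀ x y g, c (x * g) = c (y * g) ↔ c x = c y := fun x y g => by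
    rw [hc, hc, mul_inv_rev, mul_assoc, mul_inv_cancel_left]
  set f : ι → V → V := fun a p => c (Function.surjInv hsurj p * FreeGroup.of a)
  have hf : ∀ g a, c (g * FreeGroup.of a) = f a (c g) := fun g a =>
    (hc_mul _ _ _).mpr (Function.surjInv_eq hsurj (c g)).symm
  have hinj : ∀ a, Function.Injective (f a) := fun a p p' hpp' => by
    obtain ⟨g, rfl⟩ := hsurj p
    obtain ⟨g', rfl⟩ := hsurj p'
    rwa [← hf, ← hf, hc_mul] at hpp'
  exact ⟨fun a => Equiv.ofBijective (f a) (Finite.injective_iff_bijective.mp (hinj a)), hf⟩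

variable [Fintype ι] [DecidableEq V] {σ : ι → Equiv.Perm V}

lemma ncard_setOf_exists_eq_transitionCount (hsurj : Function.Surjective c)
    (hσ : ∀ g a, c (g * FreeGroup.of a) = σ a (c g)) (p q : V) :
    {a : ι | ∃ g, c g = p ∧ c (g * FreeGroup.of a) = q}.ncard = transitionCount σ p q := by
  obtain ⟨g₀, rfl⟩ := hsurj p
  have : {a : ι | ∃ g, c g = c g₀ ∧ c (g * FreeGroup.of a) = q} = {a | σ a (c g₀) = q} := by
    ext a
    simp only [Set.mem_ofPred_eq, hσ]
    exact ⟨fun ⟨g, hg, hq⟩ => hg ▸ hq, fun hq => ⟨g₀, rfl, hq⟩⟩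
  rw [this, Set.ncard_eq_toFinset_card', Set.toFinset_ofPred]
  rfl

lemma exists_transitionCount_pow_pos [Fintype V] (hsurj : Function.Surjective c)
    (hσ : ∀ g a, c (g * FreeGroup.of a) = σ a (c g)) (p q : V) :
    ∃ m, 0 < (transitionCount σ ^ m) p q := by
  suffices h : ∀ g x, ∃ m, 0 < (transitionCount σ ^ m) (c x) (c (x * g)) by
    obtain ⟨x, rfl⟩ := hsurj p
    obtain ⟨y, rfl⟩ := hsurj q
    simpa using h (x⁻¹ * y) x
  intro g
  induction g with
  | C1 => exact fun x => ⟨0, by simp⟩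
  | of a =>
    exact fun x => ⟨1, by simpa [hσ] using transitionCount_pow_apply_perm_pow_pos σ a 1 (c x)⟩
  | inv_of a _ =>
    intro x
    refine ⟨orderOf (σ a) - 1, ?_⟩
    have hx : c x = σ a (c (x * (FreeGroup.of a)⁻¹)) := by rw [← hσ, inv_mul_cancel_right]
    have hret : (σ a ^ (orderOf (σ a) - 1)) (σ a (c (x * (FreeGroup.of a)⁻¹))) =
        c (x * (FreeGroup.of a)⁻¹) := by
      rw [← Equiv.Perm.mul_apply, pow_sub_one_mul (orderOf_pos _).ne', pow_orderOf_eq_one]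
      rfl
    have := transitionCount_pow_apply_perm_pow_pos σ a (orderOf (σ a) - 1)
      (σ a (c (x * (FreeGroup.of a)⁻¹)))
    rwa [hret, ← hx] at this
  | mul g₁ g₂ ih₁ ih₂ =>
    intro x
    obtain ⟨m, hm⟩ := ih₁ x
    obtain ⟨k, hk⟩ := ih₂ (x * g₁)
    exact ⟨m + k, pow_add_apply_pos hm (by rwa [mul_assoc] at hk)⟩

end SchreierGraph

theorem sum_transitionCount_pow_apply_eq_card_pow {ι κ : Type*} [Fintype ι] [Fintype κ]
    {V : κ → Type*} [∀ i, Fintype (V i)] [∀ i, DecidableEq (V i)]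
    {K : κ → Subgroup (FreeGroup ι)} {α : κ → FreeGroup ι}
    (hpart : ∀ g, ∃! i, g * (α i)⁻¹ ∈ K i)
    {c : ∀ i, FreeGroup ι → V i} (hc : ∀ i x y, c i x = c i y ↔ x * y⁻¹ ∈ K i)
    {σ : ∀ i, ι → Equiv.Perm (V i)} (hσ : ∀ i g a, c i (g * FreeGroup.of a) = σ i a (c i g))
    (m : ℕ) (g : FreeGroup ι) :
    ∑ i, (transitionCount (σ i) ^ m) (c i g) (c i (α i)) = Fintype.card ι ^ m := by
  induction m generalizing g with
  | zero =>
    classical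
    obtain ⟨i₀, hi₀, huniq⟩ := hpart g
    have hiff : ∀ i, c i g = c i (α i) ↔ i = i₀ := fun i =>
      (hc i _ _).trans ⟨huniq i, fun h => h ▸ hi₀⟩
    calc ∑ i, (transitionCount (σ i) ^ 0) (c i g) (c i (α i)) = ∑ i, if i = i₀ then 1 else 0 :=
          sum_congr rfl fun i _ => by simp [Matrix.one_apply, hiff]
      _ = _ := by simp
  | succ m ih =>
    simp only [transitionCount_pow_succ_apply, ← hσ]
    rw [sum_comm]
    simp [ih, pow_succ']

section MarkovOperator

variable {ι V : Type*} [Fintype ι] [Fintype V]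

noncomputable def markovOperator (σ : ι → Equiv.Perm V) :
    EuclideanSpace ℂ V →L[ℂ] EuclideanSpace ℂ V :=
  (Fintype.card ι : ℂ)⁻¹ •
    ∑ a, (LinearIsometryEquiv.piLpCongrLeft 2 ℂ ℂ (σ a).symm).toLinearIsometry.toContinuousLinearMap

lemma markovOperator_apply (σ : ι → Equiv.Perm V) (x : EuclideanSpace ℂ V) (p : V) :
    markovOperator σ x p = (Fintype.card ι : ℂ)⁻¹ * ∑ a, x (σ a p) := by
  simp [markovOperator, LinearIsometryEquiv.piLpCongrLeft_apply, Equiv.piCongrLeft'_apply]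

lemma norm_markovOperator_le (σ : ι → Equiv.Perm V) : ‖markovOperator σ‖ ≤ 1 := by
  rcases isEmpty_or_nonempty ι with hι | hι
  · simp [markovOperator]
  rw [markovOperator, norm_smul]
  calc _ ≤ ‖(Fintype.card ι : ℂ)⁻¹‖ * ∑ _a : ι, (1 : ℝ) := by
        gcongr
        exact (norm_sum_le _ _).trans
          (sum_le_sum fun a _ => LinearIsometry.norm_toContinuousLinearMap_le _)
    _ = 1 := by simp [Fintype.card_ne_zero]

lemma markovOperator_pow_single_apply [DecidableEq V] (σ : ι → Equiv.Perm V) (m : ℕ) (p q : V) :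
    (markovOperator σ ^ m) (EuclideanSpace.single q 1) p =
      (transitionCount σ ^ m) p q / (Fintype.card ι : ℂ) ^ m := by
  induction m generalizing p with
  | zero => simp [Matrix.one_apply, eq_comm]
  | succ m ih =>
    rw [pow_succ', mul_apply_eq_comp, markovOperator_apply,
      transitionCount_pow_succ_apply]
    simp only [ih, Nat.cast_sum, ← sum_div, pow_succ]
    field_simp

lemma apply_perm_eq_of_smul_markovOperator {σ : ι → Equiv.Perm V} {μ : ℂ} (hμ : ‖μ‖ = 1)
    {x : EuclideanSpace ℂ V} (hx : μ • markovOperator σ x = x) (a : ι) (p : V) :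
    x (σ a p) = μ⁻¹ * x p := by
  have : Nonempty ι := ⟨a⟩
  have hn : (Fintype.card ι : ℝ) ≠ 0 := by simp [Fintype.card_ne_zero]
  set z : ι → EuclideanSpace ℂ V := fun b => LinearIsometryEquiv.piLpCongrLeft 2 ℂ ℂ (σ b).symm x
  have hz : ∀ b p, z b p = x (σ b p) := fun b p => by
    simp [z, LinearIsometryEquiv.piLpCongrLeft_apply, Equiv.piCongrLeft'_apply]
  have hB : markovOperator σ x = ∑ b, (Fintype.card ι : ℝ)⁻¹ • z b := by
    ext p
    simp [markovOperator_apply, hz, ← Finset.mul_sum, WithLp.ofLp_sum]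
  have hBx : markovOperator σ x = μ⁻¹ • x := by
    calc markovOperator σ x = μ⁻¹ • μ • markovOperator σ x := by
          rw [smul_smul, inv_mul_cancel₀ (by simp [← norm_ne_zero_iff, hμ]), one_smul]
      _ = μ⁻¹ • x := by rw [hx]
  -- `μ⁻¹ • x` is the average of the vectors `z b`, all of norm `‖x‖`; by strict convexity of the
  -- norm they must all be equal.
  have hconst : ∀ b, z b = z a := by
    by_contra! ⟨b, hb⟩
    refine (norm_sum_lt_of_strictConvexSpace (w := fun _ => (Fintype.card ι : ℝ)⁻¹) (r := ‖x‖)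
      (fun _ _ => by positivity) (by simp [hn]) (mem_univ b) (mem_univ a) hb (by simp)
      (by simp) (fun b _ => (LinearIsometryEquiv.norm_map _ _).le)).ne ?_
    rw [← hB, hBx, norm_smul, norm_inv, hμ, inv_one, one_mul]
  have hza : z a = μ⁻¹ • x := by
    rw [← hBx, hB, sum_congr rfl fun b _ => by rw [hconst b], sum_const, card_univ,
      ← Nat.cast_smul_eq_nsmul ℝ, smul_smul, mul_inv_cancel₀ hn, one_smul]
  rw [← hz, hza]
  simp

end MarkovOperator

section Walks

variable {ι V : Type*} [Fintype ι] [DecidableEq V]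

lemma apply_eq_pow_mul_of_transitionCount_pow_pos [Fintype V] {M : Type*} [Monoid M]
    {σ : ι → Equiv.Perm V} {f : V → M} {c : M} (hf : ∀ a p, f (σ a p) = c * f p) {m : ℕ}
    {p q : V} (h : 0 < (transitionCount σ ^ m) p q) : f q = c ^ m * f p := by
  induction m generalizing p with
  | zero =>
    obtain rfl : p = q := by by_contra hpq; simp [hpq] at h
    simp
  | succ m ih =>
    obtain ⟨a, ha⟩ := transitionCount_pow_succ_apply_pos_iff.mp h
    rw [ih ha, hf, pow_succ, mul_assoc]

def IsPeriodAt [Fintype V] (A : Matrix V V ℕ) (v : V) (P : ℕ) : Prop :=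
  (∀ m, 0 < m → 0 < (A ^ m) v v → P ∣ m) ∧
    ∀ e, (∀ m, 0 < m → 0 < (A ^ m) v v → e ∣ m) → e ∣ P

lemma IsPeriodAt.dvd [Fintype V] {A : Matrix V V ℕ} {v : V} {P : ℕ} (hP : IsPeriodAt A v P)
    {m : ℕ} (hm : 0 < (A ^ m) v v) : P ∣ m := by
  rcases Nat.eq_zero_or_pos m with rfl | hm₀
  · exact dvd_zero P
  · exact hP.1 m hm₀ hm

lemma IsPeriodAt.pos [Fintype V] [Nonempty ι] {σ : ι → Equiv.Perm V} {v : V} {P : ℕ}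
    (hP : IsPeriodAt (transitionCount σ) v P)
    (hconn : ∀ p q, ∃ l, 0 < (transitionCount σ ^ l) p q) : 0 < P := by
  obtain ⟨a⟩ := ‹Nonempty ι›
  obtain ⟨k, hk⟩ := hconn (σ a v) v
  have hstep : 0 < (transitionCount σ ^ 1) v (σ a v) := by
    simpa using transitionCount_pow_apply_perm_pow_pos σ a 1 v
  exact Nat.pos_of_dvd_of_pos (hP.dvd (pow_add_apply_pos hstep hk)) (by omega)

lemma pow_eq_pow_of_pow_apply_pos [Fintype V] {N : Type*} [Monoid N] {A : Matrix V V ℕ} {v q : V}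
    {P m k : ℕ} {μ : N} (hμ : μ ^ P = 1) (hdvd : ∀ l, 0 < (A ^ l) v v → P ∣ l)
    (hconn : ∀ p q, ∃ l, 0 < (A ^ l) p q) (hm : 0 < (A ^ m) v q) (hk : 0 < (A ^ k) v q) :
    μ ^ m = μ ^ k := by
  obtain ⟨l, hl⟩ := hconn q v
  have hret : ∀ {n}, 0 < (A ^ n) v q → μ ^ (n + l) = 1 := fun hn => by
    obtain ⟨j, hj⟩ := hdvd _ (pow_add_apply_pos hn hl)
    rw [hj, pow_mul, hμ, one_pow]
  refine left_inv_eq_right_inv (a := μ ^ l) ?_ ?_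
  · rw [← pow_add, hret hm]
  · rw [← pow_add, add_comm, hret hk]

end Walks

section FixedSpace

variable {ι V : Type*} [Fintype ι] [Fintype V] [DecidableEq V] {σ : ι → Equiv.Perm V}
  {v : V} {t : V → ℕ} {P : ℕ} {μ : ℂ}

noncomputable def walkCharacter (t : V → ℕ) (μ : ℂ) : EuclideanSpace ℂ V :=
  WithLp.toLp 2 fun q => μ⁻¹ ^ t q

lemma eq_smul_walkCharacter_of_mem_eqLocus (hμ : ‖μ‖ = 1)
    (ht : ∀ q, 0 < (transitionCount σ ^ t q) v q) {x : EuclideanSpace ℂ V}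
    (hx : x ∈ (μ • markovOperator σ).eqLocus 1) : x = x v • walkCharacter t μ := by
  have hfix : μ • markovOperator σ x = x := by simpa using hx
  ext q
  rw [apply_eq_pow_mul_of_transitionCount_pow_pos (f := fun q => x q)
    (apply_perm_eq_of_smul_markovOperator hμ hfix) (ht q)]
  simp [walkCharacter, mul_comm]

lemma walkCharacter_mem_eqLocus [Nonempty ι] (hμ : ‖μ‖ = 1) (hμP : μ ^ P = 1)
    (hdvd : ∀ l, 0 < (transitionCount σ ^ l) v v → P ∣ l)
    (hconn : ∀ p q, ∃ l, 0 < (transitionCount σ ^ l) p q)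
    (ht : ∀ q, 0 < (transitionCount σ ^ t q) v q) :
    walkCharacter t μ ∈ (μ • markovOperator σ).eqLocus 1 := by
  have hstep : ∀ a p, walkCharacter t μ (σ a p) = μ⁻¹ * walkCharacter t μ p := fun a p => by
    have hstep_pos : 0 < (transitionCount σ ^ 1) p (σ a p) := by
      simpa using transitionCount_pow_apply_perm_pow_pos σ a 1 p
    simp only [walkCharacter, ← pow_succ']
    exact pow_eq_pow_of_pow_apply_pos (by rw [inv_pow, hμP, inv_one]) hdvd hconn (ht (σ a p))
      (pow_add_apply_pos (ht p) hstep_pos)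
  have hμ₀ : μ ≠ 0 := by simp [← norm_ne_zero_iff, hμ]
  simp only [LinearMap.mem_eqLocus]
  ext p
  simp [markovOperator_apply, hstep, Fintype.card_ne_zero]
  field_simp

lemma eqLocus_eq_bot (hμ : ‖μ‖ = 1) (hμP : μ ^ P ≠ 1)
    (hgcd : ∀ e, (∀ m, 0 < m → 0 < (transitionCount σ ^ m) v v → e ∣ m) → e ∣ P)
    (ht : ∀ q, 0 < (transitionCount σ ^ t q) v q) :
    (μ • markovOperator σ).eqLocus 1 = ⊥ := by
  refine (Submodule.eq_bot_iff _).mpr fun x hx => ?_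
  have hfix : μ • markovOperator σ x = x := by simpa using hx
  suffices hxv : x v = 0 by rw [eq_smul_walkCharacter_of_mem_eqLocus hμ ht hx, hxv, zero_smul]
  by_contra hxv
  refine hμP (orderOf_dvd_iff_pow_eq_one.mp (hgcd _ fun m _ hm => orderOf_dvd_of_pow_eq_one ?_))
  have hret := apply_eq_pow_mul_of_transitionCount_pow_pos (f := fun q => x q)
    (apply_perm_eq_of_smul_markovOperator hμ hfix) hm
  rw [eq_comm, mul_eq_right₀ hxv, inv_pow, inv_eq_one] at hret
  exact hret

lemma eqLocus_eq_span_walkCharacter [Nonempty ι] (hμ : ‖μ‖ = 1) (hμP : μ ^ P = 1)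
    (hdvd : ∀ l, 0 < (transitionCount σ ^ l) v v → P ∣ l)
    (hconn : ∀ p q, ∃ l, 0 < (transitionCount σ ^ l) p q)
    (ht : ∀ q, 0 < (transitionCount σ ^ t q) v q) :
    (μ • markovOperator σ).eqLocus 1 = ℂ ∙ walkCharacter t μ := by
  refine le_antisymm (fun x hx => ?_) ((Submodule.span_singleton_le_iff_mem _ _).mpr
    (walkCharacter_mem_eqLocus hμ hμP hdvd hconn ht))
  rw [eq_smul_walkCharacter_of_mem_eqLocus hμ ht hx]
  exact Submodule.smul_mem _ _ (Submodule.mem_span_singleton_self _)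

lemma inner_single_starProjection_eqLocus [Nonempty ι] (hP : IsPeriodAt (transitionCount σ) v P)
    (hconn : ∀ p q, ∃ l, 0 < (transitionCount σ ^ l) p q)
    (ht : ∀ q, 0 < (transitionCount σ ^ t q) v q) (hμ : ‖μ‖ = 1) (w : V) :
    inner ℂ (EuclideanSpace.single v 1)
        (((μ • markovOperator σ).eqLocus 1).starProjection (EuclideanSpace.single w 1)) =
      if μ ^ P = 1 then μ ^ t w / Fintype.card V else 0 := by
  split_ifs with hμP
  · have hv : μ ^ t v = 1 := by
      obtain ⟨j, hj⟩ := hP.dvd (ht v)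
      rw [hj, pow_mul, hμP, one_pow]
    have hnorm : ‖walkCharacter t μ‖ ^ 2 = Fintype.card V := by
      rw [EuclideanSpace.norm_eq, Real.sq_sqrt (by positivity)]
      simp [walkCharacter, hμ]
    rw [eqLocus_eq_span_walkCharacter hμ hμP (fun _ => hP.dvd) hconn ht,
      Submodule.starProjection_singleton, inner_smul_right, EuclideanSpace.inner_single_left,
      EuclideanSpace.inner_single_right, hnorm]
    simp [walkCharacter, hv, ← Complex.inv_eq_conj hμ]
  · rw [eqLocus_eq_bot hμ hμP hP.2 ht, Submodule.starProjection_bot]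
    simp

end FixedSpace

section Cesaro

lemma tendsto_cesaro_pow_of_norm_eq_one {μ : ℂ} (hμ : ‖μ‖ = 1) (hμ1 : μ ≠ 1) :
    Tendsto (fun M : ℕ => (M : ℂ)⁻¹ * ∑ m ∈ range M, μ ^ m) atTop (𝓝 0) := by
  have hμ1' : 0 < ‖μ - 1‖ := norm_pos_iff.mpr (sub_ne_zero.mpr hμ1)
  refine squeeze_zero_norm (fun M => ?_)
    (tendsto_const_div_atTop_nhds_zero_nat (2 / ‖μ - 1‖))
  have hnum : ‖μ ^ M - 1‖ ≤ 2 :=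
    (norm_sub_le _ _).trans (by rw [norm_pow, hμ, one_pow, norm_one]; norm_num)
  rw [geom_sum_eq hμ1, norm_mul, norm_div, norm_inv, Complex.norm_natCast, div_eq_inv_mul _ (M : ℝ)]
  gcongr

variable {ι V : Type*} [Fintype ι] [Fintype V] [DecidableEq V] [Nonempty ι]
  {σ : ι → Equiv.Perm V} {v : V} {t : V → ℕ} {P : ℕ} {μ : ℂ}

theorem tendsto_cesaro_transitionCount_pow (hP : IsPeriodAt (transitionCount σ) v P)
    (hconn : ∀ p q, ∃ l, 0 < (transitionCount σ ^ l) p q)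
    (ht : ∀ q, 0 < (transitionCount σ ^ t q) v q) (hμ : ‖μ‖ = 1) (w : V) :
    Tendsto (fun M : ℕ => (M : ℂ)⁻¹ *
        ∑ m ∈ range M, μ ^ m * (transitionCount σ ^ m) v w / (Fintype.card ι : ℂ) ^ m) atTop
      (𝓝 (if μ ^ P = 1 then μ ^ t w / Fintype.card V else 0)) := by
  have hT : ‖μ • markovOperator σ‖ ≤ 1 := by
    rw [norm_smul, hμ, one_mul]
    exact norm_markovOperator_le σ
  rw [← inner_single_starProjection_eqLocus hP hconn ht hμ w]
  refine (tendsto_const_nhds.inner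
    ((μ • markovOperator σ).tendsto_birkhoffAverage_orthogonalProjection hT
      (EuclideanSpace.single w 1))).congr fun M => ?_
  rw [birkhoffAverage, birkhoffSum, inner_smul_right, inner_sum]
  congr 1
  refine sum_congr rfl fun m _ => ?_
  rw [id, ← FunLike.coe_pow_eq_iterate, smul_pow, smul_apply, inner_smul_right,
    EuclideanSpace.inner_single_left, markovOperator_pow_single_apply]
  simp [mul_div_assoc]

end Cesaro

theorem sum_ite_pow_eq_zero_of_coset_partition {ι κ : Type*} [Fintype ι] [Nonempty ι] [Fintype κ]
    {V : κ → Type*} [∀ i, Fintype (V i)] [∀ i, DecidableEq (V i)]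
    {K : κ → Subgroup (FreeGroup ι)} {α : κ → FreeGroup ι}
    (hpart : ∀ g, ∃! i, g * (α i)⁻¹ ∈ K i)
    {c : ∀ i, FreeGroup ι → V i} (hc : ∀ i x y, c i x = c i y ↔ x * y⁻¹ ∈ K i)
    (hsurj : ∀ i, Function.Surjective (c i))
    {σ : ∀ i, ι → Equiv.Perm (V i)} (hσ : ∀ i g a, c i (g * FreeGroup.of a) = σ i a (c i g))
    {P : κ → ℕ} (hP : ∀ i, IsPeriodAt (transitionCount (σ i)) (c i 1) (P i))
    {t : ∀ i, V i → ℕ} (ht : ∀ i q, 0 < (transitionCount (σ i) ^ t i q) (c i 1) q)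
    {μ : ℂ} (hμ : ‖μ‖ = 1) (hμ1 : μ ≠ 1) :
    ∑ i, (if μ ^ P i = 1 then μ ^ t i (c i (α i)) / Fintype.card (V i) else 0) = 0 := by
  have hn : (Fintype.card ι : ℂ) ≠ 0 := by simp [Fintype.card_ne_zero]
  refine tendsto_nhds_unique (tendsto_finsetSum univ fun i _ =>
    tendsto_cesaro_transitionCount_pow (hP i) (exists_transitionCount_pow_pos (hsurj i) (hσ i))
      (ht i) hμ (c i (α i))) ((tendsto_cesaro_pow_of_norm_eq_one hμ hμ1).congr fun M => ?_)
  rw [← mul_sum, sum_comm]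
  congr 1
  refine sum_congr rfl fun m _ => ?_
  rw [← sum_div, ← mul_sum, ← Nat.cast_sum,
    sum_transitionCount_pow_apply_eq_card_pow hpart hc hσ m 1, Nat.cast_pow,
    mul_div_assoc, div_self (pow_ne_zero _ hn), mul_one]

section Fourier

open ZMod

lemma stdAddChar_pow_eq_one_iff {N : ℕ} [NeZero N] (j : ZMod N) (m : ℕ) :
    stdAddChar j ^ m = 1 ↔ (m : ZMod N) * j = 0 := by
  rw [← AddChar.map_nsmul_eq_pow, ← AddChar.map_zero_eq_one (stdAddChar (N := N)),
    (injective_stdAddChar (N := N)).eq_iff, nsmul_eq_mul]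

lemma eq_of_dft_eq_zero {N : ℕ} [NeZero N] {Φ : ZMod N → ℂ} (hΦ : ∀ k ≠ 0, 𝓕 Φ k = 0)
    (j j' : ZMod N) : Φ j = Φ j' := by
  have hconst : ∀ j, Φ j = (N : ℂ)⁻¹ * 𝓕 Φ 0 := fun j => by
    conv_lhs => rw [← dft.symm_apply_apply Φ]
    rw [invDFT_apply, sum_eq_single 0 (fun k _ hk => by rw [hΦ k hk, smul_zero])
      (by simp)]
    simp
  rw [hconst, hconst]

lemma exists_two_singleton_fibers {α β : Type*} [Fintype β] [DecidableEq β] {R : Finset α}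
    {f : α → β} (hf : ∀ b, ∃ a ∈ R, f a = b) (hR : #R + 2 ≤ 2 * Fintype.card β) :
    ∃ a ∈ R, ∃ b ∈ R, a ≠ b ∧ {x ∈ R | f x = f a} = {a} ∧ {x ∈ R | f x = f b} = {b} := by
  set S : Finset β := {τ | #{x ∈ R | f x = τ} = 1}
  have hfiber : ∀ τ, 2 ≤ #{x ∈ R | f x = τ} + if τ ∈ S then 1 else 0 := fun τ => by
    obtain ⟨a, ha, rfl⟩ := hf τ
    have : 0 < #{x ∈ R | f x = f a} := card_pos.mpr ⟨a, mem_filter.mpr ⟨ha, rfl⟩⟩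
    by_cases h1 : #{x ∈ R | f x = f a} = 1
    · simp [S, h1]
    · simp [S, h1]
      omega
  have hS : 2 * Fintype.card β ≤ #R + #S := by
    calc 2 * Fintype.card β = ∑ _τ : β, 2 := by simp [mul_comm]
      _ ≤ ∑ τ, (#{x ∈ R | f x = τ} + if τ ∈ S then 1 else 0) := sum_le_sum fun τ _ => hfiber τ
      _ = #R + #S := by
        rw [sum_add_distrib, ← card_eq_sum_card_fiberwise fun x _ => mem_univ (f x), sum_boole]
        simp
  obtain ⟨τ₁, hτ₁, τ₂, hτ₂, hτ⟩ := one_lt_card.mp (show 1 < #S by omega)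
  obtain ⟨a, ha⟩ := card_eq_one.mp (mem_filter.mp hτ₁).2
  obtain ⟨b, hb⟩ := card_eq_one.mp (mem_filter.mp hτ₂).2
  have hfa : a ∈ R ∧ f a = τ₁ := mem_filter.mp (ha ▸ mem_singleton_self a)
  have hfb : b ∈ R ∧ f b = τ₂ := mem_filter.mp (hb ▸ mem_singleton_self b)
  refine ⟨a, hfa.1, b, hfb.1, fun hab => hτ (hfa.2.symm.trans (hab ▸ hfb.2)), ?_, ?_⟩
  · rwa [hfa.2]
  · rwa [hfb.2]

theorem exists_ne_eq_of_sum_stdAddChar_pow_eq_zero {κ : Type*} {N : ℕ} [NeZero N]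
    {R : Finset κ} {t : κ → ℕ} {w : κ → ℝ} (hw : ∀ i ∈ R, 0 < w i) (hR : R.Nonempty)
    (hcard : #R + 2 ≤ 2 * N)
    (hsum : ∀ j : ZMod N, j ≠ 0 → ∑ i ∈ R, stdAddChar j ^ t i * w i = 0) :
    ∃ a ∈ R, ∃ b ∈ R, a ≠ b ∧ w a = w b := by
  classical
  set F : ZMod N → ℝ := fun τ => ∑ i ∈ R with (t i : ZMod N) = τ, w i
  have hF : ∀ τ τ', F τ = F τ' := fun τ τ' => by
    refine Complex.ofReal_injective
      (eq_of_dft_eq_zero (Φ := fun τ => (F τ : ℂ)) (fun k hk => ?_) τ τ')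
    rw [dft_apply, ← hsum (-k) (neg_ne_zero.mpr hk),
      ← sum_fiberwise R (fun i => (t i : ZMod N)) fun i => stdAddChar (-k) ^ t i * w i]
    refine sum_congr rfl fun τ _ => ?_
    simp only [F, Complex.ofReal_sum, smul_eq_mul, mul_sum]
    refine sum_congr rfl fun i hi => ?_
    rw [← (mem_filter.mp hi).2, ← AddChar.map_nsmul_eq_pow, nsmul_eq_mul, mul_neg]
  obtain ⟨i₀, hi₀⟩ := hR
  have hF_pos : ∀ τ, 0 < F τ := fun τ => hF (t i₀) τ ▸
    sum_pos (fun i hi => hw i (mem_filter.mp hi).1) ⟨i₀, mem_filter.mpr ⟨hi₀, rfl⟩⟩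
  have hfiber : ∀ τ, ∃ i ∈ R, (t i : ZMod N) = τ := fun τ => by
    obtain ⟨i, hi⟩ := nonempty_of_sum_ne_zero (hF_pos τ).ne'
    exact ⟨i, mem_filter.mp hi⟩
  obtain ⟨a, ha, b, hb, hab, hFa, hFb⟩ :=
    exists_two_singleton_fibers hfiber (by rwa [ZMod.card])
  refine ⟨a, ha, b, hb, hab, ?_⟩
  have := hF (t a) (t b)
  simp only [F, hFa, hFb, sum_singleton] at this
  exact this

end Fourier

end CosetPartition

open CosetPartition in
theorem unique_period_multiplicity_general
    (n s : ℕ) (hn : 2 ≤ n)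
    (H : Fin s → Subgroup (FreeGroup (Fin n))) (α : Fin s → FreeGroup (Fin n))
    (d : Fin s → ℕ)
    (hpart : ∀ g : FreeGroup (Fin n), ∃! i : Fin s, g * (α i)⁻¹ ∈ H i)
    (c : (i : Fin s) → FreeGroup (Fin n) → Fin (d i))
    (hcsurj : ∀ i, Function.Surjective (c i))
    (hc : ∀ (i : Fin s) (x y : FreeGroup (Fin n)), c i x = c i y ↔ x * y⁻¹ ∈ H i)
    (A : (i : Fin s) → Matrix (Fin (d i)) (Fin (d i)) ℕ)
    (hA : ∀ (i : Fin s) (p q : Fin (d i)), A i p q =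
      Set.ncard {a : Fin n | ∃ g, c i g = p ∧ c i (g * FreeGroup.of a) = q})
    (hp : Fin s → ℕ)
    (hpdvd : ∀ (i : Fin s) (m : ℕ), 0 < m → 0 < ((A i) ^ m) (c i 1) (c i 1) → hp i ∣ m)
    (hpgcd : ∀ (i : Fin s) (e : ℕ),
      (∀ m : ℕ, 0 < m → 0 < ((A i) ^ m) (c i 1) (c i 1) → e ∣ m) → e ∣ hp i)
    (h : ℕ) (hh : 1 < h)
    (honly : ∀ i : Fin s, 1 < hp i → hp i = h)
    (hex : ∃ i : Fin s, hp i = h)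
    (r : ℕ) (hr : r = (Finset.univ.filter (fun i : Fin s => hp i = h)).card)
    (hle : r ≤ 2 * (h - 1)) :
    ∃ j k : Fin s, j ≠ k ∧ d j = d k := by
  have : NeZero h := ⟨by omega⟩
  have : Nonempty (Fin n) := ⟨⟨0, by omega⟩⟩
  choose σ hσ using fun i => exists_perm_of_coset_coding (hcsurj i) (hc i)
  obtain rfl : A = fun i => transitionCount (σ i) := funext fun i => Matrix.ext fun p q => by
    rw [hA, ncard_setOf_exists_eq_transitionCount (hcsurj i) (hσ i)]
  have hP : ∀ i, IsPeriodAt (transitionCount (σ i)) (c i 1) (hp i) := fun i => ⟨hpdvd i, hpgcd i⟩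
  have hp_cases : ∀ i, hp i = 1 ∨ hp i = h := fun i => by
    have := (hP i).pos (exists_transitionCount_pow_pos (hcsurj i) (hσ i))
    by_cases h1 : 1 < hp i
    exacts [.inr (honly i h1), .inl (by omega)]
  choose t ht using fun i q => exists_transitionCount_pow_pos (hcsurj i) (hσ i) (c i 1) q
  obtain ⟨a, -, b, -, hab, hw⟩ := exists_ne_eq_of_sum_stdAddChar_pow_eq_zero
    (N := h) (R := univ.filter (hp · = h)) (w := fun i => (d i : ℝ)⁻¹)
    (fun i _ => by have := (c i 1).pos; positivity) (hex.imp fun i hi => by simpa using hi)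
    (by rw [← hr]; omega) fun j hj => by
      have hpow : ∀ i, ZMod.stdAddChar j ^ hp i = 1 ↔ hp i = h := fun i => by
        rw [stdAddChar_pow_eq_one_iff]
        rcases hp_cases i with h1 | h1 <;> simp [h1, hj]
        omega
      simpa [sum_filter, hpow, div_eq_mul_inv] using
        sum_ite_pow_eq_zero_of_coset_partition hpart hc hcsurj hσ hP ht
          (μ := ZMod.stdAddChar j) (by simp)
          ((ZMod.injective_stdAddChar.ne_iff' (AddChar.map_zero_eq_one _)).mpr hj)
  exact ⟨a, b, hab, by exact_mod_cast inv_inj.mp hw⟩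

/-- For a coset partition of `F_n` (`n ≥ 2`) in which exactly one period value
`h > 1` occurs, with `r` repetitions and `h < r ≤ 2(h−1)`, the partition has
multiplicity. -/
theorem unique_period_multiplicity
    (n s : ℕ) (hn : 2 ≤ n)
    (H : Fin s → Subgroup (FreeGroup (Fin n))) (α : Fin s → FreeGroup (Fin n))
    (d : Fin s → ℕ) (hd : ∀ i, 1 < d i)
    (hpart : ∀ g : FreeGroup (Fin n), ∃! i : Fin s, g * (α i)⁻¹ ∈ H i)
    (c : (i : Fin s) → FreeGroup (Fin n) → Fin (d i))
    (hcsurj : ∀ i, Function.Surjective (c i))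
    (hc : ∀ (i : Fin s) (x y : FreeGroup (Fin n)), c i x = c i y ↔ x * y⁻¹ ∈ H i)
    (A : (i : Fin s) → Matrix (Fin (d i)) (Fin (d i)) ℕ)
    (hA : ∀ (i : Fin s) (p q : Fin (d i)), A i p q =
      Set.ncard {a : Fin n | ∃ g, c i g = p ∧ c i (g * FreeGroup.of a) = q})
    (hp : Fin s → ℕ)
    (hpdvd : ∀ (i : Fin s) (m : ℕ), 0 < m → 0 < ((A i) ^ m) (c i 1) (c i 1) → hp i ∣ m)
    (hpgcd : ∀ (i : Fin s) (e : ℕ),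
      (∀ m : ℕ, 0 < m → 0 < ((A i) ^ m) (c i 1) (c i 1) → e ∣ m) → e ∣ hp i)
    (h : ℕ) (hh : 1 < h)
    (honly : ∀ i : Fin s, 1 < hp i → hp i = h)
    (hex : ∃ i : Fin s, hp i = h)
    (r : ℕ) (hr : r = (Finset.univ.filter (fun i : Fin s => hp i = h)).card)
    (hlt : h < r) (hle : r ≤ 2 * (h - 1)) :
    ∃ j k : Fin s, j ≠ k ∧ d j = d k :=
  unique_period_multiplicity_general n s hn H α d hpart c hcsurj hc A hA hp hpdvd hpgcd h hh honly
    hex r hr hle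
end
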